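/- arXiv:1411.5652 — 15 statements merged into one kernel-verified Lean document; each statement's English description precedes it below -/
import Mathlib

section
/- Let a, b, c, d, f, g, h : ℝ → ℝ be smooth with f' ≠ 0 and g ≠ 0 everywhere, and let A, B, C, D : ℝ → ℝ be differentiable functions satisfying, for all x: A(f(x)) = a/(f'·g²), B(f(x)) = (b·g − 3a·h)/(f'·g²), C(f(x)) = (3a·h² − 2b·g·h + c·g² + g'·g)/(f'·g²), D(f(x)) = (−a·h³ + b·g·h² − c·g²·h + d·g³ + h'·g² − g'·g·h)/(f'·g²) (right-hand sides evaluated at x). Then the relative invariant s₃ = a'·b − b'·a + a·b·c − (2/9)·b³ − 3a²·d satisfies, for all x, (A'·B − B'·A + A·B·C − (2/9)·B³ − 3A²·D)(f(x)) = s₃(x)/(f'(x)³·g(x)³). In particular, the condition s₃ = 0 is invariant under linear point transformations. -/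
/-! Both transformed coefficients `A` and `B` are quotients by the weight `M = f'·g²`, so the chain
rule and the quotient rule express `A'(f x)` and `B'(f x)` through `a, b, g, h`, their first
derivatives and `f''`. Substituting these and the formulas for `A, B, C, D` into `s₃`, every term
involving `f''`, `g'` or `h'` cancels and what remains is `s₃(x) / (f'·g)³`. -/

theorem deriv_mul_deriv_eq_of_comp_eq {A f P : ℝ → ℝ} {x p : ℝ}
    (hA : DifferentiableAt ℝ A (f x)) (hf : DifferentiableAt ℝ f x)
    (hAf : (fun y => A (f y)) = P) (hP : HasDerivAt P p x) :
    deriv A (f x) * deriv f x = p := by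
  rw [← deriv_comp x hA hf, Function.comp_def, hAf]
  exact hP.deriv

/-- Primed letters stand for derivatives at `x`, `f₁` and `f₂` for `f'(x)` and `f''(x)`, and
`A, A', …` for the values at `f x`. -/
theorem abel_s3_transform {a a' b b' c d f₁ f₂ g g' h h' A A' B B' C D : ℝ}
    (hf₁ : f₁ ≠ 0) (hg : g ≠ 0)
    (hA : A = a / (f₁ * g ^ 2))
    (hB : B = (b * g - 3 * a * h) / (f₁ * g ^ 2))
    (hC : C = (3 * a * h ^ 2 - 2 * b * g * h + c * g ^ 2 + g' * g) / (f₁ * g ^ 2))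
    (hD : D = (-a * h ^ 3 + b * g * h ^ 2 - c * g ^ 2 * h + d * g ^ 3 + h' * g ^ 2 - g' * g * h)
      / (f₁ * g ^ 2))
    (hA' : A' * f₁ = (a' * (f₁ * g ^ 2) - a * (f₂ * g ^ 2 + f₁ * (2 * g * g'))) / (f₁ * g ^ 2) ^ 2)
    (hB' : B' * f₁ = ((b' * g + b * g' - (3 * a' * h + 3 * a * h')) * (f₁ * g ^ 2)
      - (b * g - 3 * a * h) * (f₂ * g ^ 2 + f₁ * (2 * g * g'))) / (f₁ * g ^ 2) ^ 2) :
    A' * B - B' * A + A * B * C - (2 / 9) * B ^ 3 - 3 * A ^ 2 * D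
      = (a' * b - b' * a + a * b * c - (2 / 9) * b ^ 3 - 3 * a ^ 2 * d) / (f₁ ^ 3 * g ^ 3) := by
  rw [← eq_div_iff hf₁] at hA' hB'
  subst hA hB hC hD hA' hB'
  field_simp
  ring

theorem abel_s3_relative_invariant_general
    (a b c d f g h A B C D : ℝ → ℝ)
    (ha : ContDiff ℝ (⊤ : ℕ∞) a) (hb : ContDiff ℝ (⊤ : ℕ∞) b)
    (hf : ContDiff ℝ (⊤ : ℕ∞) f) (hg : ContDiff ℝ (⊤ : ℕ∞) g)
    (hh : ContDiff ℝ (⊤ : ℕ∞) h)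
    (hf' : ∀ x, deriv f x ≠ 0) (hg0 : ∀ x, g x ≠ 0)
    (hA : Differentiable ℝ A) (hB : Differentiable ℝ B)
    (hAe : ∀ x, A (f x) = a x / (deriv f x * g x ^ 2))
    (hBe : ∀ x, B (f x) = (b x * g x - 3 * a x * h x) / (deriv f x * g x ^ 2))
    (hCe : ∀ x, C (f x) = (3 * a x * h x ^ 2 - 2 * b x * g x * h x
      + c x * g x ^ 2 + deriv g x * g x) / (deriv f x * g x ^ 2))
    (hDe : ∀ x, D (f x) = (-(a x) * h x ^ 3 + b x * g x * h x ^ 2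
      - c x * g x ^ 2 * h x + d x * g x ^ 3 + deriv h x * g x ^ 2
      - deriv g x * g x * h x) / (deriv f x * g x ^ 2)) :
    (∀ x, deriv A (f x) * B (f x) - deriv B (f x) * A (f x)
        + A (f x) * B (f x) * C (f x) - (2/9) * B (f x) ^ 3
        - 3 * A (f x) ^ 2 * D (f x)
      = (deriv a x * b x - deriv b x * a x + a x * b x * c x
          - (2/9) * b x ^ 3 - 3 * a x ^ 2 * d x)
          / (deriv f x ^ 3 * g x ^ 3))
    ∧ (∀ x, (deriv a x * b x - deriv b x * a x + a x * b x * c x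
          - (2/9) * b x ^ 3 - 3 * a x ^ 2 * d x = 0)
        ↔ (deriv A (f x) * B (f x) - deriv B (f x) * A (f x)
          + A (f x) * B (f x) * C (f x) - (2/9) * B (f x) ^ 3
          - 3 * A (f x) ^ 2 * D (f x) = 0)) := by
  have had : Differentiable ℝ a := ha.differentiable (by simp)
  have hbd : Differentiable ℝ b := hb.differentiable (by simp)
  have hfd : Differentiable ℝ f := hf.differentiable (by simp)
  have hf'd : Differentiable ℝ (deriv f) := (contDiff_infty_iff_deriv.mp hf).2.differentiable (by simp)
  have hgd : Differentiable ℝ g := hg.differentiable (by simp)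
  have hhd : Differentiable ℝ h := hh.differentiable (by simp)
  have transform : ∀ x, deriv A (f x) * B (f x) - deriv B (f x) * A (f x)
        + A (f x) * B (f x) * C (f x) - (2/9) * B (f x) ^ 3 - 3 * A (f x) ^ 2 * D (f x)
      = (deriv a x * b x - deriv b x * a x + a x * b x * c x
          - (2/9) * b x ^ 3 - 3 * a x ^ 2 * d x) / (deriv f x ^ 3 * g x ^ 3) := by
    intro x
    have hM0 : deriv f x * g x ^ 2 ≠ 0 := mul_ne_zero (hf' x) (pow_ne_zero 2 (hg0 x))
    have hM : HasDerivAt (fun y => deriv f y * g y ^ 2)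
        (deriv (deriv f) x * g x ^ 2 + deriv f x * (2 * g x * deriv g x)) x :=
      ((hf'd x).hasDerivAt.mul ((hgd x).hasDerivAt.pow 2)).congr_deriv (by rw [Pi.pow_apply]; ring)
    have hN := ((hbd x).hasDerivAt.mul (hgd x).hasDerivAt).sub
      (((had x).hasDerivAt.const_mul 3).mul (hhd x).hasDerivAt)
    exact abel_s3_transform (hf' x) (hg0 x) (hAe x) (hBe x) (hCe x) (hDe x)
      (deriv_mul_deriv_eq_of_comp_eq (hA _) (hfd x) (funext hAe) ((had x).hasDerivAt.div hM hM0))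
      (deriv_mul_deriv_eq_of_comp_eq (hB _) (hfd x) (funext hBe) (hN.div hM hM0))
  refine ⟨transform, fun x => ?_⟩
  have hweight : deriv f x ^ 3 * g x ^ 3 ≠ 0 :=
    mul_ne_zero (pow_ne_zero 3 (hf' x)) (pow_ne_zero 3 (hg0 x))
  rw [transform x, div_eq_zero_iff, or_iff_left hweight]

/-- `s₃ = a'b − b'a + abc − (2/9)b³ − 3a²d` is a relative invariant
(of weight `(f'·g)³`) of Abel equations of the first kind under linear point
transformations; in particular the condition `s₃ = 0` is invariant. -/
theorem abel_s3_relative_invariant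
    (a b c d f g h A B C D : ℝ → ℝ)
    (ha : ContDiff ℝ (⊤ : ℕ∞) a) (hb : ContDiff ℝ (⊤ : ℕ∞) b)
    (hc : ContDiff ℝ (⊤ : ℕ∞) c) (hd : ContDiff ℝ (⊤ : ℕ∞) d)
    (hf : ContDiff ℝ (⊤ : ℕ∞) f) (hg : ContDiff ℝ (⊤ : ℕ∞) g)
    (hh : ContDiff ℝ (⊤ : ℕ∞) h)
    (hf' : ∀ x, deriv f x ≠ 0) (hg0 : ∀ x, g x ≠ 0)
    (hA : Differentiable ℝ A) (hB : Differentiable ℝ B)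
    (hC : Differentiable ℝ C) (hD : Differentiable ℝ D)
    (hAe : ∀ x, A (f x) = a x / (deriv f x * g x ^ 2))
    (hBe : ∀ x, B (f x) = (b x * g x - 3 * a x * h x) / (deriv f x * g x ^ 2))
    (hCe : ∀ x, C (f x) = (3 * a x * h x ^ 2 - 2 * b x * g x * h x
      + c x * g x ^ 2 + deriv g x * g x) / (deriv f x * g x ^ 2))
    (hDe : ∀ x, D (f x) = (-(a x) * h x ^ 3 + b x * g x * h x ^ 2
      - c x * g x ^ 2 * h x + d x * g x ^ 3 + deriv h x * g x ^ 2
      - deriv g x * g x * h x) / (deriv f x * g x ^ 2)) :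
    (∀ x, deriv A (f x) * B (f x) - deriv B (f x) * A (f x)
        + A (f x) * B (f x) * C (f x) - (2/9) * B (f x) ^ 3
        - 3 * A (f x) ^ 2 * D (f x)
      = (deriv a x * b x - deriv b x * a x + a x * b x * c x
          - (2/9) * b x ^ 3 - 3 * a x ^ 2 * d x)
          / (deriv f x ^ 3 * g x ^ 3))
    ∧ (∀ x, (deriv a x * b x - deriv b x * a x + a x * b x * c x
          - (2/9) * b x ^ 3 - 3 * a x ^ 2 * d x = 0)
        ↔ (deriv A (f x) * B (f x) - deriv B (f x) * A (f x)
          + A (f x) * B (f x) * C (f x) - (2/9) * B (f x) ^ 3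
          - 3 * A (f x) ^ 2 * D (f x) = 0)) :=
  abel_s3_relative_invariant_general a b c d f g h A B C D ha hb hf hg hh hf' hg0 hA hB hAe hBe hCe
    hDe
end

section
/- Let a, b, c, d, f, g, h : ℝ → ℝ be smooth with f' ≠ 0 and g ≠ 0 everywhere, and let A, B, C : ℝ → ℝ be differentiable functions satisfying, for all x: A(f(x)) = a/(f'·g²), B(f(x)) = (b·g − 3a·h)/(f'·g²), C(f(x)) = (3a·h² − 2b·g·h + c·g² + g'·g)/(f'·g²). Then for all x, (A' + A·C − (1/3)·B²)(f(x)) = (1/(f'(x)²·g(x)²)) · ( a'(x) + a(x)·c(x) − (1/3)·b(x)² − a(x)·f''(x)/f'(x) − a(x)·g'(x)/g(x) ). (This is the transformation law of the quantity a' + ac − b²/3 that makes the Liouville–Appell recurrence produce relative invariants.) -/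
/-!
Differentiating `A (f x) = a / (f' g²)` by the chain rule expresses `A'(f x)` through `a'`, `f''`
and `g'`. Substituting this together with the expressions for `B (f x)` and `C (f x)`, every term
containing `h` cancels in `A' + A C - B²/3`.
-/

lemma deriv_eq_div_of_comp_hasDerivAt {A f u : ℝ → ℝ} {u' x : ℝ}
    (hA : DifferentiableAt ℝ A (f x)) (hf : DifferentiableAt ℝ f x) (hf' : deriv f x ≠ 0)
    (hAf : A ∘ f = u) (hu : HasDerivAt u u' x) : deriv A (f x) = u' / deriv f x := by
  have hchain : HasDerivAt u (deriv A (f x) * deriv f x) x :=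
    hAf ▸ hA.hasDerivAt.comp x hf.hasDerivAt
  rw [eq_div_iff hf', hchain.unique hu]

lemma abel_P_transformation_identity (a a' b c f₁ f₂ g g' h : ℝ) (hf₁ : f₁ ≠ 0) (hg : g ≠ 0) :
    (a' * (f₁ * g ^ 2) - a * (f₂ * g ^ 2 + f₁ * (2 * g * g'))) / (f₁ * g ^ 2) ^ 2 / f₁
      + a / (f₁ * g ^ 2)
        * ((3 * a * h ^ 2 - 2 * b * g * h + c * g ^ 2 + g' * g) / (f₁ * g ^ 2))
      - 1 / 3 * ((b * g - 3 * a * h) / (f₁ * g ^ 2)) ^ 2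
      = 1 / (f₁ ^ 2 * g ^ 2) * (a' + a * c - 1 / 3 * b ^ 2 - a * f₂ / f₁ - a * g' / g) := by
  field_simp
  ring

theorem abel_P_transformation_law_general
    (a b c f g h A B C : ℝ → ℝ)
    (ha : ContDiff ℝ (⊤ : ℕ∞) a)
    (hf : ContDiff ℝ (⊤ : ℕ∞) f) (hg : ContDiff ℝ (⊤ : ℕ∞) g)
    (hf' : ∀ x, deriv f x ≠ 0) (hg0 : ∀ x, g x ≠ 0)
    (hA : Differentiable ℝ A)
    (hAe : ∀ x, A (f x) = a x / (deriv f x * g x ^ 2))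
    (hBe : ∀ x, B (f x) = (b x * g x - 3 * a x * h x) / (deriv f x * g x ^ 2))
    (hCe : ∀ x, C (f x) = (3 * a x * h x ^ 2 - 2 * b x * g x * h x
      + c x * g x ^ 2 + deriv g x * g x) / (deriv f x * g x ^ 2)) :
    ∀ x, deriv A (f x) + A (f x) * C (f x) - (1/3) * B (f x) ^ 2
      = (1 / (deriv f x ^ 2 * g x ^ 2))
        * (deriv a x + a x * c x - (1/3) * b x ^ 2
          - a x * deriv (deriv f) x / deriv f x
          - a x * deriv g x / g x) := by
  intro x
  have hquot : HasDerivAt (fun y => a y / (deriv f y * g y ^ 2))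
      ((deriv a x * (deriv f x * g x ^ 2)
        - a x * (deriv (deriv f) x * g x ^ 2 + deriv f x * (2 * g x * deriv g x)))
        / (deriv f x * g x ^ 2) ^ 2) x := by
    have ha' := (ha.differentiable (by simp) x).hasDerivAt
    have hf'' := ((contDiff_infty_iff_deriv.mp hf).2.differentiable (by simp) x).hasDerivAt
    have hg' := (hg.differentiable (by simp) x).hasDerivAt
    exact (ha'.div (hf''.mul (hg'.pow 2)) (mul_ne_zero (hf' x) (pow_ne_zero 2 (hg0 x)))).congr_deriv
      (by simp only [Pi.mul_apply, Pi.pow_apply]; ring)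
  rw [deriv_eq_div_of_comp_hasDerivAt (hA (f x)) (hf.differentiable (by simp) x) (hf' x)
    (funext hAe) hquot, hAe, hBe, hCe]
  exact abel_P_transformation_identity _ _ _ _ _ _ _ _ _ (hf' x) (hg0 x)

/-- the transformation law of the quantity `a' + a·c − b²/3` under
linear point transformations of Abel equations of the first kind. -/
theorem abel_P_transformation_law
    (a b c d f g h A B C : ℝ → ℝ)
    (ha : ContDiff ℝ (⊤ : ℕ∞) a) (hb : ContDiff ℝ (⊤ : ℕ∞) b)
    (hc : ContDiff ℝ (⊤ : ℕ∞) c) (hd : ContDiff ℝ (⊤ : ℕ∞) d)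
    (hf : ContDiff ℝ (⊤ : ℕ∞) f) (hg : ContDiff ℝ (⊤ : ℕ∞) g)
    (hh : ContDiff ℝ (⊤ : ℕ∞) h)
    (hf' : ∀ x, deriv f x ≠ 0) (hg0 : ∀ x, g x ≠ 0)
    (hA : Differentiable ℝ A) (hB : Differentiable ℝ B)
    (hC : Differentiable ℝ C)
    (hAe : ∀ x, A (f x) = a x / (deriv f x * g x ^ 2))
    (hBe : ∀ x, B (f x) = (b x * g x - 3 * a x * h x) / (deriv f x * g x ^ 2))
    (hCe : ∀ x, C (f x) = (3 * a x * h x ^ 2 - 2 * b x * g x * h x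
      + c x * g x ^ 2 + deriv g x * g x) / (deriv f x * g x ^ 2)) :
    ∀ x, deriv A (f x) + A (f x) * C (f x) - (1/3) * B (f x) ^ 2
      = (1 / (deriv f x ^ 2 * g x ^ 2))
        * (deriv a x + a x * c x - (1/3) * b x ^ 2
          - a x * deriv (deriv f) x / deriv f x
          - a x * deriv g x / g x) :=
  abel_P_transformation_law_general a b c f g h A B C ha hf hg hf' hg0 hA hAe hBe hCe
end

section
/- Let a, b, c, d, f, g, h : ℝ → ℝ be smooth with f' ≠ 0 and g ≠ 0 everywhere, and let A, B, C : ℝ → ℝ be differentiable satisfying A(f(x)) = a/(f'·g²), B(f(x)) = (b·g − 3a·h)/(f'·g²), C(f(x)) = (3a·h² − 2b·g·h + c·g² + g'·g)/(f'·g²) for all x. Let m be a positive integer, and let σ : ℝ → ℝ and S : ℝ → ℝ be differentiable functions such that S(f(x)) = σ(x)/(f'(x)·g(x))^m for all x (i.e., S is a relative invariant of weight m). Then the function A·S' − m·S·(A' + A·C − (1/3)·B²) is a relative invariant of weight m + 2: for all x, (A·S' − m·S·(A' + A·C − (1/3)·B²))(f(x)) = ( a(x)·σ'(x) − m·σ(x)·(a'(x)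 + a(x)·c(x) − (1/3)·b(x)²) ) / (f'(x)·g(x))^{m+2}. In particular the sequence s₃, s₅, s₇, … defined by s₃ = a'b − b'a + abc − (2/9)b³ − 3a²d and s_{2n+1} = a·s_{2n−1}' − (2n−1)·s_{2n−1}·(a' + ac − (1/3)b²) consists of relative invariants, s_{2n+1} having weight 2n+1. -/
/-!
Write `w = f'·g`. Differentiating `S ∘ f = σ / wᵐ` and `A ∘ f = a / (f'·g²)` by the chain rule gives
`(S' ∘ f) = (σ' − m·σ·w'/w) / (wᵐ·f')` and, after the `h`-terms of `A·C − B²/3` cancel,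
`(A' + A·C − B²/3) ∘ f = (a' + a·c − b²/3) / w² − a·w'/w³`.
Both anomalous terms are proportional to `a·σ·w'`, and they cancel in `A·S' − m·S·(A' + A·C − B²/3)`.
-/

lemma deriv_eq_div_deriv_of_comp_eq {F f φ : ℝ → ℝ} {x : ℝ} (hFφ : ∀ y, F (f y) = φ y)
    (hF : DifferentiableAt ℝ F (f x)) (hf : DifferentiableAt ℝ f x) (hf' : deriv f x ≠ 0) :
    deriv F (f x) = deriv φ x / deriv f x := by
  rw [eq_div_iff hf', ← deriv_comp x hF hf]
  exact congrArg (deriv · x) (funext hFφ)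

section AbelTransformation

variable {a b c f g h σ A B C S : ℝ → ℝ} {x : ℝ}

lemma deriv_of_relative_invariant (m : ℕ) (hSe : ∀ y, S (f y) = σ y / (deriv f y * g y) ^ m)
    (hS : DifferentiableAt ℝ S (f x)) (hσ : DifferentiableAt ℝ σ x)
    (hf : DifferentiableAt ℝ f x) (hf2 : DifferentiableAt ℝ (deriv f) x)
    (hg : DifferentiableAt ℝ g x) (hf' : deriv f x ≠ 0) (hg0 : g x ≠ 0) :
    deriv S (f x) =
      (deriv σ x - m * σ x * (deriv (deriv f) x * g x + deriv f x * deriv g x)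
          / (deriv f x * g x)) / ((deriv f x * g x) ^ m * deriv f x) := by
  have hw0 : deriv f x * g x ≠ 0 := mul_ne_zero hf' hg0
  have hw := (hf2.hasDerivAt.fun_mul hg.hasDerivAt).fun_pow m
  have hquot := hσ.hasDerivAt.fun_div hw (pow_ne_zero m hw0)
  rw [deriv_eq_div_deriv_of_comp_eq hSe hS hf hf', hquot.deriv]
  -- `HasDerivAt.fun_pow` differentiates `wᵐ` as `m·w^(m-1)·w'` with truncated `m - 1`.
  rcases m with _ | k
  · simp
  · field_simp
    push_cast
    ring

lemma deriv_of_transformed_leading_coeff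
    (hAe : ∀ y, A (f y) = a y / (deriv f y * g y ^ 2))
    (hA : DifferentiableAt ℝ A (f x)) (ha : DifferentiableAt ℝ a x)
    (hf : DifferentiableAt ℝ f x) (hf2 : DifferentiableAt ℝ (deriv f) x)
    (hg : DifferentiableAt ℝ g x) (hf' : deriv f x ≠ 0) (hg0 : g x ≠ 0) :
    deriv A (f x) = deriv a x / (deriv f x * g x) ^ 2
      - a x * (deriv (deriv f) x * g x + 2 * deriv f x * deriv g x) / (deriv f x * g x) ^ 3 := by
  have hquot := ha.hasDerivAt.fun_div (hf2.hasDerivAt.fun_mul (hg.hasDerivAt.fun_pow 2))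
    (mul_ne_zero hf' (pow_ne_zero 2 hg0))
  rw [deriv_eq_div_deriv_of_comp_eq hAe hA hf hf', hquot.deriv]
  field_simp
  ring

lemma deriv_add_mul_sub_sq_of_transformed
    (hAe : ∀ y, A (f y) = a y / (deriv f y * g y ^ 2))
    (hBe : ∀ y, B (f y) = (b y * g y - 3 * a y * h y) / (deriv f y * g y ^ 2))
    (hCe : ∀ y, C (f y) = (3 * a y * h y ^ 2 - 2 * b y * g y * h y
      + c y * g y ^ 2 + deriv g y * g y) / (deriv f y * g y ^ 2))
    (hA : DifferentiableAt ℝ A (f x)) (ha : DifferentiableAt ℝ a x)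
    (hf : DifferentiableAt ℝ f x) (hf2 : DifferentiableAt ℝ (deriv f) x)
    (hg : DifferentiableAt ℝ g x) (hf' : deriv f x ≠ 0) (hg0 : g x ≠ 0) :
    deriv A (f x) + A (f x) * C (f x) - (1/3) * B (f x) ^ 2
      = (deriv a x + a x * c x - (1/3) * b x ^ 2) / (deriv f x * g x) ^ 2
        - a x * (deriv (deriv f) x * g x + deriv f x * deriv g x) / (deriv f x * g x) ^ 3 := by
  rw [deriv_of_transformed_leading_coeff hAe hA ha hf hf2 hg hf' hg0, hAe, hBe, hCe]
  field_simp
  ring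

end AbelTransformation

theorem abel_recurrence_relative_invariant_general
    (a b c f g h A B C : ℝ → ℝ)
    (ha : ContDiff ℝ (⊤ : ℕ∞) a)
    (hf : ContDiff ℝ (⊤ : ℕ∞) f) (hg : ContDiff ℝ (⊤ : ℕ∞) g)
    (hf' : ∀ x, deriv f x ≠ 0) (hg0 : ∀ x, g x ≠ 0)
    (hA : Differentiable ℝ A)
    (hAe : ∀ x, A (f x) = a x / (deriv f x * g x ^ 2))
    (hBe : ∀ x, B (f x) = (b x * g x - 3 * a x * h x) / (deriv f x * g x ^ 2))
    (hCe : ∀ x, C (f x) = (3 * a x * h x ^ 2 - 2 * b x * g x * h x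
      + c x * g x ^ 2 + deriv g x * g x) / (deriv f x * g x ^ 2))
    (m : ℕ)
    (σ S : ℝ → ℝ) (hσ : Differentiable ℝ σ) (hS : Differentiable ℝ S)
    (hSe : ∀ x, S (f x) = σ x / (deriv f x * g x) ^ m) :
    ∀ x, A (f x) * deriv S (f x)
        - (m : ℝ) * S (f x)
          * (deriv A (f x) + A (f x) * C (f x) - (1/3) * B (f x) ^ 2)
      = (a x * deriv σ x
          - (m : ℝ) * σ x * (deriv a x + a x * c x - (1/3) * b x ^ 2))
        / (deriv f x * g x) ^ (m + 2) := by
  intro x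
  have hf2 : Differentiable ℝ (deriv f) :=
    (contDiff_infty_iff_deriv.mp hf).2.differentiable (by simp)
  have hfd : Differentiable ℝ f := hf.differentiable (by simp)
  have hgd : Differentiable ℝ g := hg.differentiable (by simp)
  have had : Differentiable ℝ a := ha.differentiable (by simp)
  have hfx := hf' x
  have hgx := hg0 x
  rw [deriv_add_mul_sub_sq_of_transformed hAe hBe hCe (hA _) (had x) (hfd x) (hf2 x) (hgd x)
      hfx hgx,
    deriv_of_relative_invariant m hSe (hS _) (hσ x) (hfd x) (hf2 x) (hgd x) hfx hgx, hAe, hSe]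
  field_simp
  ring

/-- if `S` is a relative invariant of weight `m` of Abel equations
of the first kind, then `A·S' − m·S·(A' + A·C − B²/3)` is a relative invariant
of weight `m + 2` (the Liouville–Appell recurrence produces relative
invariants). -/
theorem abel_recurrence_relative_invariant
    (a b c d f g h A B C : ℝ → ℝ)
    (ha : ContDiff ℝ (⊤ : ℕ∞) a) (hb : ContDiff ℝ (⊤ : ℕ∞) b)
    (hc : ContDiff ℝ (⊤ : ℕ∞) c) (hd : ContDiff ℝ (⊤ : ℕ∞) d)
    (hf : ContDiff ℝ (⊤ : ℕ∞) f) (hg : ContDiff ℝ (⊤ : ℕ∞) g)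
    (hh : ContDiff ℝ (⊤ : ℕ∞) h)
    (hf' : ∀ x, deriv f x ≠ 0) (hg0 : ∀ x, g x ≠ 0)
    (hA : Differentiable ℝ A) (hB : Differentiable ℝ B)
    (hC : Differentiable ℝ C)
    (hAe : ∀ x, A (f x) = a x / (deriv f x * g x ^ 2))
    (hBe : ∀ x, B (f x) = (b x * g x - 3 * a x * h x) / (deriv f x * g x ^ 2))
    (hCe : ∀ x, C (f x) = (3 * a x * h x ^ 2 - 2 * b x * g x * h x
      + c x * g x ^ 2 + deriv g x * g x) / (deriv f x * g x ^ 2))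
    (m : ℕ) (hm : 0 < m)
    (σ S : ℝ → ℝ) (hσ : Differentiable ℝ σ) (hS : Differentiable ℝ S)
    (hSe : ∀ x, S (f x) = σ x / (deriv f x * g x) ^ m) :
    ∀ x, A (f x) * deriv S (f x)
        - (m : ℝ) * S (f x)
          * (deriv A (f x) + A (f x) * C (f x) - (1/3) * B (f x) ^ 2)
      = (a x * deriv σ x
          - (m : ℝ) * σ x * (deriv a x + a x * c x - (1/3) * b x ^ 2))
        / (deriv f x * g x) ^ (m + 2) :=
  abel_recurrence_relative_invariant_general a b c f g h A B C ha hf hg hf' hg0 hA hAe hBe hCe m σ S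
    hσ hS hSe
end

section
/- Let a, b, c, d : ℝ → ℝ be smooth on an open interval U, and suppose s₃ > 0 on U, where s₃ = a'b − b'a + abc − (2/9)b³ − 3a²d. Set P = a' + ac − (1/3)b², s₅ = a·s₃' − 3·s₃·P, s₇ = a·s₅' − 5·s₅·P, J₁ = s₅³/s₃⁵, J₂ = s₅·s₇/s₃⁴, and for a differentiable function F define ∇F = (a/s₃^{2/3})·F'. Then on U the real cube root J₁^{1/3} = s₅/s₃^{5/3} satisfies the identity J₁^{1/3} · ∇(J₁^{1/3}) = J₂ − (5/3)·J₁. Consequently J₂ is a function of J₁ and ∇J₁, so the invariants J₁ and the invariant derivation ∇ generate J₂. -/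
/-- The relative invariant `s₃ = a'b − b'a + abc − (2/9)b³ − 3a²d`. -/
noncomputable def abelS3 (a b c d : ℝ → ℝ) : ℝ → ℝ := fun x =>
  deriv a x * b x - deriv b x * a x + a x * b x * c x
    - (2/9) * b x ^ 3 - 3 * a x ^ 2 * d x

/-- The quantity `P = a' + ac − b²/3`. -/
noncomputable def abelP (a b c : ℝ → ℝ) : ℝ → ℝ := fun x =>
  deriv a x + a x * c x - (1/3) * b x ^ 2

/-- The relative invariant `s₅ = a·s₃' − 3·s₃·P`. -/
noncomputable def abelS5 (a b c d : ℝ → ℝ) : ℝ → ℝ := fun x =>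
  a x * deriv (abelS3 a b c d) x - 3 * abelS3 a b c d x * abelP a b c x

/-- The relative invariant `s₇ = a·s₅' − 5·s₅·P`. -/
noncomputable def abelS7 (a b c d : ℝ → ℝ) : ℝ → ℝ := fun x =>
  a x * deriv (abelS5 a b c d) x - 5 * abelS5 a b c d x * abelP a b c x

/-!
Both `s₅ = a s₃' - 3 s₃ P` and `s₇ = a s₅' - 5 s₅ P` are built from the same operator
`f ↦ a f' - k f P` on a relative invariant of weight `k`. By the quotient rule,
`∇(s₅ / s₃^{5/3}) = s₇ / s₃^{7/3} - (5/3) s₅² / s₃^{10/3}`: the `P`-terms coming from `s₇` and from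
`s₃' = (s₅ + 3 s₃ P) / a` cancel. Multiplying by `s₅ / s₃^{5/3}` gives `J₂ - (5/3) J₁`.
-/

open Real

theorem rpow_div_three_mul_rpow_div_three {y : ℝ} (hy : 0 < y) (m n k : ℕ) (h : m + n = 3 * k) :
    y ^ ((m : ℝ) / 3) * y ^ ((n : ℝ) / 3) = y ^ k := by
  rw [← rpow_add hy, ← rpow_natCast]
  congr 1
  field_simp
  exact_mod_cast h

section DivRpow

variable {f s : ℝ → ℝ} {f' s' x : ℝ}

theorem HasDerivAt.div_rpow_const (hf : HasDerivAt f f' x) (hs : HasDerivAt s s' x)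
    (hpos : 0 < s x) (r : ℝ) :
    HasDerivAt (fun t => f t / s t ^ r) (f' / s x ^ r - r * f x * s' / s x ^ (r + 1)) x := by
  have : s x ^ r ≠ 0 := (rpow_pos_of_pos hpos r).ne'
  refine (hf.div (hs.rpow_const (p := r) (Or.inl hpos.ne')) this).congr_deriv ?_
  rw [rpow_sub_one hpos.ne', rpow_add_one hpos.ne']
  field_simp

/-- For `w = a`, `p = P` and `s = s₃` the two `p`-terms cancel, so `∇(f / s₃^{k/3})` is expressed
through `a f' - k f P` and `s₅` alone. -/
theorem mul_deriv_div_rpow_div_three (w p k : ℝ) (hf : DifferentiableAt ℝ f x)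
    (hs : DifferentiableAt ℝ s x) (hpos : 0 < s x) :
    w / s x ^ (2 / 3 : ℝ) * deriv (fun t => f t / s t ^ (k / 3)) x
      = (w * deriv f x - k * f x * p) / s x ^ ((k + 2) / 3)
        - k / 3 * f x * (w * deriv s x - 3 * s x * p) / s x ^ ((k + 5) / 3) := by
  rw [(hf.hasDerivAt.div_rpow_const hs.hasDerivAt hpos (k / 3)).deriv]
  have hk_add_two : s x ^ ((k + 2) / 3) = s x ^ (2 / 3 : ℝ) * s x ^ (k / 3) := by
    rw [← rpow_add hpos]; ring_nf
  have hk_add_five : s x ^ ((k + 5) / 3) = s x ^ (2 / 3 : ℝ) * s x ^ (k / 3 + 1) := by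
    rw [← rpow_add hpos]; ring_nf
  have hk_succ : s x ^ (k / 3 + 1) = s x ^ (k / 3) * s x := rpow_add_one hpos.ne' _
  rw [hk_add_two, hk_add_five, hk_succ]
  field_simp
  ring

end DivRpow

section AbelInvariants

variable {a b c d : ℝ → ℝ}

theorem contDiff_abelS3 (ha : ContDiff ℝ (⊤ : ℕ∞) a) (hb : ContDiff ℝ (⊤ : ℕ∞) b)
    (hc : ContDiff ℝ (⊤ : ℕ∞) c) (hd : ContDiff ℝ (⊤ : ℕ∞) d) :
    ContDiff ℝ (⊤ : ℕ∞) (abelS3 a b c d) := by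
  have := (contDiff_infty_iff_deriv.mp ha).2
  have := (contDiff_infty_iff_deriv.mp hb).2
  unfold abelS3
  fun_prop

theorem contDiff_abelS5 (ha : ContDiff ℝ (⊤ : ℕ∞) a) (hb : ContDiff ℝ (⊤ : ℕ∞) b)
    (hc : ContDiff ℝ (⊤ : ℕ∞) c) (hd : ContDiff ℝ (⊤ : ℕ∞) d) :
    ContDiff ℝ (⊤ : ℕ∞) (abelS5 a b c d) := by
  have := (contDiff_infty_iff_deriv.mp ha).2
  have := (contDiff_infty_iff_deriv.mp (contDiff_abelS3 ha hb hc hd)).2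
  have := contDiff_abelS3 ha hb hc hd
  unfold abelS5 abelP
  fun_prop

theorem nabla_abelS5_div_rpow {x : ℝ} (hs₃ : DifferentiableAt ℝ (abelS3 a b c d) x)
    (hs₅ : DifferentiableAt ℝ (abelS5 a b c d) x) (hpos : 0 < abelS3 a b c d x) :
    a x / abelS3 a b c d x ^ (2 / 3 : ℝ)
        * deriv (fun t => abelS5 a b c d t / abelS3 a b c d t ^ (5 / 3 : ℝ)) x
      = abelS7 a b c d x / abelS3 a b c d x ^ (7 / 3 : ℝ)
        - 5 / 3 * abelS5 a b c d x * abelS5 a b c d x / abelS3 a b c d x ^ (10 / 3 : ℝ) := by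
  have := mul_deriv_div_rpow_div_three (a x) (abelP a b c x) 5 hs₅ hs₃ hpos
  norm_num at this
  exact this

end AbelInvariants

theorem abel_J2_from_J1_and_nabla_general
    (a b c d : ℝ → ℝ)
    (ha : ContDiff ℝ (⊤ : ℕ∞) a) (hb : ContDiff ℝ (⊤ : ℕ∞) b)
    (hc : ContDiff ℝ (⊤ : ℕ∞) c) (hd : ContDiff ℝ (⊤ : ℕ∞) d)
    (U : Set ℝ)
    (hs3 : ∀ x ∈ U, 0 < abelS3 a b c d x) :
    ∀ x ∈ U,
      (abelS5 a b c d x / abelS3 a b c d x ^ ((5:ℝ)/3))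
        * ((a x / abelS3 a b c d x ^ ((2:ℝ)/3))
            * deriv (fun t => abelS5 a b c d t
                / abelS3 a b c d t ^ ((5:ℝ)/3)) x)
      = abelS5 a b c d x * abelS7 a b c d x / abelS3 a b c d x ^ 4
        - (5/3) * (abelS5 a b c d x ^ 3 / abelS3 a b c d x ^ 5) := by
  intro x hx
  have hpos := hs3 x hx
  have hs₃ := (contDiff_abelS3 ha hb hc hd).differentiable (by simp) x
  have hs₅ := (contDiff_abelS5 ha hb hc hd).differentiable (by simp) x
  have hpow_four := rpow_div_three_mul_rpow_div_three hpos 5 7 4 rfl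
  have hpow_five := rpow_div_three_mul_rpow_div_three hpos 5 10 5 rfl
  norm_num at hpow_four hpow_five
  rw [nabla_abelS5_div_rpow hs₃ hs₅ hpos, ← hpow_four, ← hpow_five]
  field_simp

/-- with `J₁ = s₅³/s₃⁵`, `J₂ = s₅·s₇/s₃⁴` and
`∇F = (a/s₃^{2/3})·F'`, the real cube root `J₁^{1/3} = s₅/s₃^{5/3}` satisfies
`J₁^{1/3}·∇(J₁^{1/3}) = J₂ − (5/3)·J₁`; hence `J₁` and `∇` generate `J₂`. -/
theorem abel_J2_from_J1_and_nabla
    (a b c d : ℝ → ℝ)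
    (ha : ContDiff ℝ (⊤ : ℕ∞) a) (hb : ContDiff ℝ (⊤ : ℕ∞) b)
    (hc : ContDiff ℝ (⊤ : ℕ∞) c) (hd : ContDiff ℝ (⊤ : ℕ∞) d)
    (U : Set ℝ) (hU : ∃ p q : ℝ, U = Set.Ioo p q)
    (hs3 : ∀ x ∈ U, 0 < abelS3 a b c d x) :
    ∀ x ∈ U,
      (abelS5 a b c d x / abelS3 a b c d x ^ ((5:ℝ)/3))
        * ((a x / abelS3 a b c d x ^ ((2:ℝ)/3))
            * deriv (fun t => abelS5 a b c d t
                / abelS3 a b c d t ^ ((5:ℝ)/3)) x)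
      = abelS5 a b c d x * abelS7 a b c d x / abelS3 a b c d x ^ 4
        - (5/3) * (abelS5 a b c d x ^ 3 / abelS3 a b c d x ^ 5) :=
  abel_J2_from_J1_and_nabla_general a b c d ha hb hc hd U hs3
end

section
/- Let a, b, c, d, f, g, h : ℝ → ℝ be smooth with f' > 0 and g > 0 everywhere, and let A, B, C, D : ℝ → ℝ be differentiable satisfying the transformation identities A(f(x)) = a/(f'·g²), B(f(x)) = (b·g − 3a·h)/(f'·g²), C(f(x)) = (3a·h² − 2b·g·h + c·g² + g'·g)/(f'·g²), D(f(x)) = (−a·h³ + b·g·h² − c·g²·h + d·g³ + h'·g² − g'·g·h)/(f'·g²) for all x. Define s₃ = a'b − b'a + abc − (2/9)b³ − 3a²d from (a,b,c,d) and S₃ likewise from (A,B,C,D), and assume s₃ > 0 on an open interval U. Let I, Ĩ : ℝ → ℝ be differentiable with Ĩ(f(x)) = I(x) for all x ∈ U. Then for all x ∈ U, ( (A / S₃^{2/3}) · Ĩ' )(f(x)) = ( a(x) / s₃(x)^{2/3} ) · I'(x). That is, ∇ = (s₁/s₃^{2/3})·d/dx (with s₁ = a) is an invariant derivation: it commutes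 with the action of the pseudogroup of linear transformations on absolute invariants. -/
/-
Along a linear point transformation the relative invariant transforms by
`S₃ ∘ f = s₃ / (f' g)³`, so `(S₃ ∘ f)^{2/3} = s₃^{2/3} / (f' g)²`, while `A ∘ f = a / (f' g²)`.
Hence `(A / S₃^{2/3}) ∘ f = f' · a / s₃^{2/3}`, and the extra factor `f'` is exactly what the chain
rule `I' = (Ĩ' ∘ f) · f'` absorbs. In the transformation law of `s₃` the second derivative `f''`
appears only through the derivative of the common denominator `f' g²`, and these terms cancel in
`A'B − B'A`.
-/

open Filter Topology

theorem deriv_eq_deriv_comp_mul_of_eventuallyEq {𝕜 : Type*} [NontriviallyNormedField 𝕜]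
    {P f φ : 𝕜 → 𝕜} {x : 𝕜} (hP : DifferentiableAt 𝕜 P (f x)) (hf : DifferentiableAt 𝕜 f x)
    (he : (fun t => P (f t)) =ᶠ[𝓝 x] φ) : deriv φ x = deriv P (f x) * deriv f x := by
  rw [← he.deriv_eq]
  exact deriv_comp x hP hf

theorem rpow_two_div_three_div_pow_three {s u : ℝ} (hs : 0 ≤ s) (hu : 0 < u) :
    (s / u ^ 3) ^ ((2 : ℝ) / 3) = s ^ ((2 : ℝ) / 3) / u ^ 2 := by
  rw [Real.div_rpow hs (by positivity), ← Real.rpow_natCast u 3, ← Real.rpow_mul hu.le]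
  norm_num

theorem abelS3_comp_eq_div {a b c d f g h A B C D : ℝ → ℝ} {x : ℝ}
    (ha : DifferentiableAt ℝ a x) (hb : DifferentiableAt ℝ b x)
    (hf : DifferentiableAt ℝ f x) (hf' : DifferentiableAt ℝ (deriv f) x)
    (hg : DifferentiableAt ℝ g x) (hh : DifferentiableAt ℝ h x)
    (hA : DifferentiableAt ℝ A (f x)) (hB : DifferentiableAt ℝ B (f x))
    (hfx : deriv f x ≠ 0) (hgx : g x ≠ 0)
    (hAe : ∀ t, A (f t) = a t / (deriv f t * g t ^ 2))
    (hBe : ∀ t, B (f t) = (b t * g t - 3 * a t * h t) / (deriv f t * g t ^ 2))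
    (hCe : C (f x) = (3 * a x * h x ^ 2 - 2 * b x * g x * h x
      + c x * g x ^ 2 + deriv g x * g x) / (deriv f x * g x ^ 2))
    (hDe : D (f x) = (-(a x) * h x ^ 3 + b x * g x * h x ^ 2
      - c x * g x ^ 2 * h x + d x * g x ^ 3 + deriv h x * g x ^ 2
      - deriv g x * g x * h x) / (deriv f x * g x ^ 2)) :
    abelS3 A B C D (f x) = abelS3 a b c d x / (deriv f x * g x) ^ 3 := by
  have hk : deriv f x * g x ^ 2 ≠ 0 := mul_ne_zero hfx (pow_ne_zero 2 hgx)
  have hk' : HasDerivAt (fun t => deriv f t * g t ^ 2)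
      (deriv (deriv f) x * g x ^ 2 + deriv f x * (2 * g x * deriv g x)) x := by
    simpa using hf'.hasDerivAt.fun_mul (hg.hasDerivAt.fun_pow 2)
  have hA' := ha.hasDerivAt.fun_div hk' hk
  have hB' := ((hb.hasDerivAt.fun_mul hg.hasDerivAt).fun_sub
    ((ha.hasDerivAt.const_mul 3).fun_mul hh.hasDerivAt)).fun_div hk' hk
  have dA := deriv_eq_deriv_comp_mul_of_eventuallyEq hA hf (.of_forall hAe)
  have dB := deriv_eq_deriv_comp_mul_of_eventuallyEq hB hf (.of_forall hBe)
  rw [hA'.deriv] at dA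
  rw [hB'.deriv] at dB
  simp only [abelS3]
  rw [eq_div_of_mul_eq hfx dA.symm, eq_div_of_mul_eq hfx dB.symm, hAe, hBe, hCe, hDe]
  field_simp
  ring

theorem abel_invariant_derivation_general
    (a b c d f g h A B C D : ℝ → ℝ)
    (ha : ContDiff ℝ (⊤ : ℕ∞) a) (hb : ContDiff ℝ (⊤ : ℕ∞) b)
    (hf : ContDiff ℝ (⊤ : ℕ∞) f) (hg : ContDiff ℝ (⊤ : ℕ∞) g)
    (hh : ContDiff ℝ (⊤ : ℕ∞) h)
    (hf' : ∀ x, 0 < deriv f x) (hg0 : ∀ x, 0 < g x)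
    (hA : Differentiable ℝ A) (hB : Differentiable ℝ B)
    (hAe : ∀ x, A (f x) = a x / (deriv f x * g x ^ 2))
    (hBe : ∀ x, B (f x) = (b x * g x - 3 * a x * h x) / (deriv f x * g x ^ 2))
    (hCe : ∀ x, C (f x) = (3 * a x * h x ^ 2 - 2 * b x * g x * h x
      + c x * g x ^ 2 + deriv g x * g x) / (deriv f x * g x ^ 2))
    (hDe : ∀ x, D (f x) = (-(a x) * h x ^ 3 + b x * g x * h x ^ 2
      - c x * g x ^ 2 * h x + d x * g x ^ 3 + deriv h x * g x ^ 2
      - deriv g x * g x * h x) / (deriv f x * g x ^ 2))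
    (U : Set ℝ) (hU : ∃ p q : ℝ, U = Set.Ioo p q)
    (hs3 : ∀ x ∈ U, 0 < abelS3 a b c d x)
    (I Itil : ℝ → ℝ) (hItil : Differentiable ℝ Itil)
    (hmatch : ∀ x ∈ U, Itil (f x) = I x) :
    ∀ x ∈ U,
      (A (f x) / abelS3 A B C D (f x) ^ ((2:ℝ)/3)) * deriv Itil (f x)
        = (a x / abelS3 a b c d x ^ ((2:ℝ)/3)) * deriv I x := by
  intro x hx
  obtain ⟨p, q, rfl⟩ := hU
  have hfx := hf' x
  have hgx := hg0 x
  have hS3 : abelS3 A B C D (f x) = abelS3 a b c d x / (deriv f x * g x) ^ 3 :=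
    abelS3_comp_eq_div (ha.differentiable (by simp) x) (hb.differentiable (by simp) x)
      (hf.differentiable (by simp) x)
      ((contDiff_infty_iff_deriv.mp hf).2.differentiable (by simp) x)
      (hg.differentiable (by simp) x) (hh.differentiable (by simp) x) (hA _) (hB _)
      hfx.ne' hgx.ne' hAe hBe (hCe x) (hDe x)
  have dI : deriv I x = deriv Itil (f x) * deriv f x :=
    deriv_eq_deriv_comp_mul_of_eventuallyEq (hItil _) (hf.differentiable (by simp) x)
      (eventuallyEq_of_mem (isOpen_Ioo.mem_nhds hx) hmatch)
  have hs : 0 < abelS3 a b c d x ^ ((2 : ℝ) / 3) := Real.rpow_pos_of_pos (hs3 x hx) _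
  rw [hAe x, hS3, rpow_two_div_three_div_pow_three (hs3 x hx).le (mul_pos hfx hgx), dI]
  field_simp

/-- `∇ = (s₁/s₃^{2/3})·d/dx` (with `s₁ = a`) is an invariant
derivation: it commutes with the action of the pseudogroup of linear
transformations on absolute invariants. -/
theorem abel_invariant_derivation
    (a b c d f g h A B C D : ℝ → ℝ)
    (ha : ContDiff ℝ (⊤ : ℕ∞) a) (hb : ContDiff ℝ (⊤ : ℕ∞) b)
    (hc : ContDiff ℝ (⊤ : ℕ∞) c) (hd : ContDiff ℝ (⊤ : ℕ∞) d)
    (hf : ContDiff ℝ (⊤ : ℕ∞) f) (hg : ContDiff ℝ (⊤ : ℕ∞) g)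
    (hh : ContDiff ℝ (⊤ : ℕ∞) h)
    (hf' : ∀ x, 0 < deriv f x) (hg0 : ∀ x, 0 < g x)
    (hA : Differentiable ℝ A) (hB : Differentiable ℝ B)
    (hC : Differentiable ℝ C) (hD : Differentiable ℝ D)
    (hAe : ∀ x, A (f x) = a x / (deriv f x * g x ^ 2))
    (hBe : ∀ x, B (f x) = (b x * g x - 3 * a x * h x) / (deriv f x * g x ^ 2))
    (hCe : ∀ x, C (f x) = (3 * a x * h x ^ 2 - 2 * b x * g x * h x
      + c x * g x ^ 2 + deriv g x * g x) / (deriv f x * g x ^ 2))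
    (hDe : ∀ x, D (f x) = (-(a x) * h x ^ 3 + b x * g x * h x ^ 2
      - c x * g x ^ 2 * h x + d x * g x ^ 3 + deriv h x * g x ^ 2
      - deriv g x * g x * h x) / (deriv f x * g x ^ 2))
    (U : Set ℝ) (hU : ∃ p q : ℝ, U = Set.Ioo p q)
    (hs3 : ∀ x ∈ U, 0 < abelS3 a b c d x)
    (I Itil : ℝ → ℝ) (hI : Differentiable ℝ I) (hItil : Differentiable ℝ Itil)
    (hmatch : ∀ x ∈ U, Itil (f x) = I x) :
    ∀ x ∈ U,
      (A (f x) / abelS3 A B C D (f x) ^ ((2:ℝ)/3)) * deriv Itil (f x)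
        = (a x / abelS3 a b c d x ^ ((2:ℝ)/3)) * deriv I x :=
  abel_invariant_derivation_general a b c d f g h A B C D ha hb hf hg hh hf' hg0 hA hB hAe hBe hCe
    hDe U hU hs3 I Itil hItil hmatch
end

section
/- Let a, b, c, d : ℝ → ℝ be smooth with a(x) ≠ 0 for all x, and let x₀ ∈ ℝ. Then there exist an open interval V containing x₀, smooth functions f, g, h : V → ℝ with f' ≠ 0 and g ≠ 0 on V, and a smooth function R : ℝ → ℝ, such that for every differentiable y : V → ℝ satisfying y'(x) = a(x)·y(x)³ + b(x)·y(x)² + c(x)·y(x) + d(x) on V and every differentiable Y with Y(f(x)) = g(x)·y(x) + h(x) for all x ∈ V, one has Y'(f(x)) = Y(f(x))³ + R(f(x)) for all x ∈ V. That is, every Abel equation of the first kind can locally be brought to the canonical form Y' = Y³ + R by a linear point transformation. -/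
/-!
Take `g = exp ∫ (b²/(3a) - c)`, `h = g b / (3a)` and `f = ∫ a / g²`. For `Y (f x) = g y + h`
the chain rule gives `Y' ∘ f = (g' y + g y' + h') g² / a`, a cubic polynomial in `y` whose `y³`,
`y²` and `y` coefficients are exactly those of `(g y + h)³`: these three requirements are what
determine `f'`, `h` and `g'/g`. What is left is a term `S` depending on `x` alone
(`abelFreeTerm`), and since `f` is a local diffeomorphism, `S ∘ f⁻¹`, cut off by a bump function,
is a smooth `R` on all of `ℝ` with `R ∘ f = S` near `x₀`.
-/

open scoped ContDiff Topology
open Set Metric Real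

theorem ContDiff.integral_upper_limit {n : ℕ∞} {P : ℝ → ℝ} (hP : ContDiff ℝ n P) (a : ℝ) :
    ContDiff ℝ (n + 1) (fun x => ∫ t in a..x, P t) := by
  have hderiv : deriv (fun x => ∫ t in a..x, P t) = P :=
    funext fun x => hP.continuous.deriv_integral _ a x
  refine contDiff_succ_iff_deriv.mpr ⟨fun x => ?_, fun h => absurd h (by simp), by rwa [hderiv]⟩
  exact (hP.continuous.integral_hasStrictDerivAt a x).hasDerivAt.differentiableAt

theorem ContDiff.smul_of_tsupport_subset {𝕜 E F : Type*} [NontriviallyNormedField 𝕜]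
    [NormedAddCommGroup E] [NormedSpace 𝕜 E] [NormedAddCommGroup F] [NormedSpace 𝕜 F]
    {n : WithTop ℕ∞} {φ : E → 𝕜} {f : E → F} {U : Set E} (hφ : ContDiff 𝕜 n φ)
    (hf : ContDiffOn 𝕜 n f U) (hU : IsOpen U) (hφU : tsupport φ ⊆ U) :
    ContDiff 𝕜 n (φ • f) := by
  refine contDiff_of_contDiffOn_union_of_isOpen (hφ.contDiffOn.smul hf)
    (contDiffOn_const (c := 0).congr fun x hx => ?_)
    (compl_subset_iff_union.mp (compl_subset_compl.mpr hφU)) hU (isClosed_tsupport φ).isOpen_compl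
  simp [image_eq_zero_of_notMem_tsupport hx]

theorem exists_contDiff_comp_eventuallyEq {n : ℕ∞} (hn : 1 ≤ n) {F S : ℝ → ℝ} {x₀ : ℝ}
    (hF : ContDiff ℝ n F) (hF₀ : deriv F x₀ ≠ 0) (hS : ContDiff ℝ n S) :
    ∃ R : ℝ → ℝ, ContDiff ℝ n R ∧ ∀ᶠ x in 𝓝 x₀, R (F x) = S x := by
  have hn' : (1 : WithTop ℕ∞) ≤ n := by exact_mod_cast hn
  have hn0 : (n : WithTop ℕ∞) ≠ 0 := (zero_lt_one.trans_le hn').ne'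
  have hFd : ∀ x, HasDerivAt F (deriv F x) x :=
    fun x => (hF.differentiable hn0).differentiableAt.hasDerivAt
  set e := hF.contDiffAt.toOpenPartialHomeomorph F ((hFd x₀).hasFDerivAt_equiv hF₀) hn0
  have hx₀ : x₀ ∈ e.source := hF.contDiffAt.mem_toOpenPartialHomeomorph_source _ _
  set T := e.target ∩ e.symm ⁻¹' {x | deriv F x ≠ 0}
  have hT : IsOpen T :=
    e.isOpen_inter_preimage_symm (isOpen_ne_fun (hF.continuous_deriv hn') continuous_const)
  have hFx₀T : F x₀ ∈ T :=
    ⟨e.map_source hx₀, show deriv F (e.symm (e x₀)) ≠ 0 by rwa [e.left_inv hx₀]⟩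
  have hST : ContDiffOn ℝ n (S ∘ e.symm) T := fun z hz =>
    (hS.contDiffAt.comp z
      (e.contDiffAt_symm_deriv hz.2 hz.1 (hFd _) hF.contDiffAt)).contDiffWithinAt
  obtain ⟨r, hr, hrT⟩ := isOpen_iff.mp hT _ hFx₀T
  let φ : ContDiffBump (F x₀) := ⟨r / 4, r / 2, by positivity, by linarith⟩
  refine ⟨(φ : ℝ → ℝ) • (S ∘ e.symm), (φ.contDiff.smul_of_tsupport_subset hST hT ?_), ?_⟩
  · exact φ.tsupport_eq ▸ (closedBall_subset_ball (show r / 2 < r by linarith)).trans hrT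
  · have hnear : ∀ᶠ x in 𝓝 x₀, F x ∈ closedBall (F x₀) (r / 4) :=
      hF.continuous.continuousAt.preimage_mem_nhds (closedBall_mem_nhds _ (by positivity))
    filter_upwards [hnear, e.eventually_left_inverse hx₀] with x hxφ hxe
    change e.symm (F x) = x at hxe
    simp [φ.one_of_mem_closedBall hxφ, hxe]

theorem deriv_mul_eq_of_comp_eventuallyEq {f g h y Y : ℝ → ℝ} {f' g' h' y' x : ℝ}
    (hf : HasDerivAt f f' x) (hg : HasDerivAt g g' x) (hh : HasDerivAt h h' x)
    (hy : HasDerivAt y y' x) (hY : DifferentiableAt ℝ Y (f x))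
    (hYf : ∀ᶠ t in 𝓝 x, Y (f t) = g t * y t + h t) :
    deriv Y (f x) * f' = g' * y x + g x * y' + h' :=
  ((hY.hasDerivAt.comp x hf).congr_of_eventuallyEq (hYf.mono fun _ => Eq.symm)).unique
    ((hg.mul hy).add hh)

noncomputable section AbelTransform

variable (a b c d : ℝ → ℝ)

def abelScaleLogDeriv (x : ℝ) : ℝ := b x ^ 2 / (3 * a x) - c x

def abelScale (x : ℝ) : ℝ := exp (∫ t in 0..x, abelScaleLogDeriv a b c t)

def abelShift (x : ℝ) : ℝ := abelScale a b c x * b x / (3 * a x)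

def abelNewVar (x : ℝ) : ℝ := ∫ t in 0..x, a t / abelScale a b c t ^ 2

def abelFreeTerm (x : ℝ) : ℝ :=
  (abelScale a b c x * d x + deriv (abelShift a b c) x) * (abelScale a b c x ^ 2 / a x)
    - abelShift a b c x ^ 3

variable {a b c d : ℝ → ℝ}

theorem abelScale_ne_zero (x : ℝ) : abelScale a b c x ≠ 0 := (exp_pos _).ne'

theorem contDiff_abelScaleLogDeriv (ha : ContDiff ℝ ∞ a) (hb : ContDiff ℝ ∞ b)
    (hc : ContDiff ℝ ∞ c) (ha0 : ∀ x, a x ≠ 0) : ContDiff ℝ ∞ (abelScaleLogDeriv a b c) :=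
  ((hb.pow 2).div (contDiff_const.mul ha) fun x => mul_ne_zero three_ne_zero (ha0 x)).sub hc

theorem hasDerivAt_abelScale (hP : Continuous (abelScaleLogDeriv a b c)) (x : ℝ) :
    HasDerivAt (abelScale a b c) (abelScale a b c x * abelScaleLogDeriv a b c x) x :=
  (hP.integral_hasStrictDerivAt 0 x).hasDerivAt.exp

theorem contDiff_abelScale (hP : ContDiff ℝ ∞ (abelScaleLogDeriv a b c)) :
    ContDiff ℝ ∞ (abelScale a b c) :=
  contDiff_exp.comp (hP.integral_upper_limit 0).of_succ

theorem contDiff_abelShift (ha : ContDiff ℝ ∞ a) (hb : ContDiff ℝ ∞ b) (ha0 : ∀ x, a x ≠ 0)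
    (hP : ContDiff ℝ ∞ (abelScaleLogDeriv a b c)) : ContDiff ℝ ∞ (abelShift a b c) :=
  ((contDiff_abelScale hP).mul hb).div (contDiff_const.mul ha)
    fun x => mul_ne_zero three_ne_zero (ha0 x)

theorem contDiff_div_abelScale_sq (ha : ContDiff ℝ ∞ a)
    (hP : ContDiff ℝ ∞ (abelScaleLogDeriv a b c)) :
    ContDiff ℝ ∞ fun x => a x / abelScale a b c x ^ 2 :=
  ha.div ((contDiff_abelScale hP).pow 2) fun x => pow_ne_zero 2 (abelScale_ne_zero x)

theorem hasDerivAt_abelNewVar (ha : ContDiff ℝ ∞ a)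
    (hP : ContDiff ℝ ∞ (abelScaleLogDeriv a b c)) (x : ℝ) :
    HasDerivAt (abelNewVar a b c) (a x / abelScale a b c x ^ 2) x :=
  ((contDiff_div_abelScale_sq ha hP).continuous.integral_hasStrictDerivAt 0 x).hasDerivAt

theorem contDiff_abelNewVar (ha : ContDiff ℝ ∞ a)
    (hP : ContDiff ℝ ∞ (abelScaleLogDeriv a b c)) : ContDiff ℝ ∞ (abelNewVar a b c) :=
  ((contDiff_div_abelScale_sq ha hP).integral_upper_limit 0).of_succ

theorem contDiff_abelFreeTerm (ha : ContDiff ℝ ∞ a) (hb : ContDiff ℝ ∞ b)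
    (hd : ContDiff ℝ ∞ d) (ha0 : ∀ x, a x ≠ 0) (hP : ContDiff ℝ ∞ (abelScaleLogDeriv a b c)) :
    ContDiff ℝ ∞ (abelFreeTerm a b c d) := by
  have hh := contDiff_abelShift ha hb ha0 hP
  have hg := contDiff_abelScale hP
  exact (((hg.mul hd).add (contDiff_infty_iff_deriv.mp hh).2).mul
    ((hg.pow 2).div ha ha0)).sub (hh.pow 3)

theorem deriv_eq_cube_add_abelFreeTerm (ha : ContDiff ℝ ∞ a) (ha0 : ∀ x, a x ≠ 0)
    (hP : ContDiff ℝ ∞ (abelScaleLogDeriv a b c)) {y Y : ℝ → ℝ} {x : ℝ}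
    (hh : DifferentiableAt ℝ (abelShift a b c) x)
    (hy : HasDerivAt y (a x * y x ^ 3 + b x * y x ^ 2 + c x * y x + d x) x)
    (hY : DifferentiableAt ℝ Y (abelNewVar a b c x))
    (hYf : ∀ᶠ t in 𝓝 x,
      Y (abelNewVar a b c t) = abelScale a b c t * y t + abelShift a b c t) :
    deriv Y (abelNewVar a b c x) = Y (abelNewVar a b c x) ^ 3 + abelFreeTerm a b c d x := by
  have hchain := deriv_mul_eq_of_comp_eventuallyEq (hasDerivAt_abelNewVar ha hP x)
    (hasDerivAt_abelScale hP.continuous x) hh.hasDerivAt hy hY hYf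
  rw [hYf.self_of_nhds]
  have hax := ha0 x
  have hgx := abelScale_ne_zero (a := a) (b := b) (c := c) x
  rw [← eq_div_iff (div_ne_zero hax (pow_ne_zero 2 hgx))] at hchain
  rw [hchain]
  simp only [abelFreeTerm, abelShift, abelScaleLogDeriv]
  field_simp
  ring

end AbelTransform

/-- every Abel equation of the first kind can locally be brought
to the canonical form `Y' = Y³ + R` by a linear point transformation. -/
theorem abel_local_canonical_form
    (a b c d : ℝ → ℝ)
    (ha : ContDiff ℝ (⊤ : ℕ∞) a) (hb : ContDiff ℝ (⊤ : ℕ∞) b)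
    (hc : ContDiff ℝ (⊤ : ℕ∞) c) (hd : ContDiff ℝ (⊤ : ℕ∞) d)
    (ha0 : ∀ x, a x ≠ 0) (x₀ : ℝ) :
    ∃ (u v : ℝ) (f g h R : ℝ → ℝ),
      x₀ ∈ Set.Ioo u v
      ∧ ContDiffOn ℝ (⊤ : ℕ∞) f (Set.Ioo u v)
      ∧ ContDiffOn ℝ (⊤ : ℕ∞) g (Set.Ioo u v)
      ∧ ContDiffOn ℝ (⊤ : ℕ∞) h (Set.Ioo u v)
      ∧ ContDiff ℝ (⊤ : ℕ∞) R
      ∧ (∀ x ∈ Set.Ioo u v, deriv f x ≠ 0)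
      ∧ (∀ x ∈ Set.Ioo u v, g x ≠ 0)
      ∧ ∀ y Y : ℝ → ℝ,
          (∀ x ∈ Set.Ioo u v, DifferentiableAt ℝ y x) →
          (∀ x ∈ Set.Ioo u v, deriv y x
            = a x * y x ^ 3 + b x * y x ^ 2 + c x * y x + d x) →
          (∀ x ∈ Set.Ioo u v, DifferentiableAt ℝ Y (f x)) →
          (∀ x ∈ Set.Ioo u v, Y (f x) = g x * y x + h x) →
          ∀ x ∈ Set.Ioo u v, deriv Y (f x) = Y (f x) ^ 3 + R (f x) := by
  have hP := contDiff_abelScaleLogDeriv ha hb hc ha0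
  have hF' : ∀ x, deriv (abelNewVar a b c) x ≠ 0 := fun x =>
    (hasDerivAt_abelNewVar ha hP x).deriv ▸
      div_ne_zero (ha0 x) (pow_ne_zero 2 (abelScale_ne_zero x))
  obtain ⟨R, hR, hRF⟩ := exists_contDiff_comp_eventuallyEq le_top
    (contDiff_abelNewVar ha hP) (hF' x₀) (contDiff_abelFreeTerm ha hb hd ha0 hP)
  obtain ⟨δ, hδ, hRFδ⟩ := Metric.eventually_nhds_iff_ball.mp hRF
  have hshift := contDiff_abelShift ha hb ha0 hP
  refine ⟨x₀ - δ, x₀ + δ, abelNewVar a b c, abelScale a b c, abelShift a b c, R, ?_,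
    (contDiff_abelNewVar ha hP).contDiffOn, (contDiff_abelScale hP).contDiffOn,
    hshift.contDiffOn, hR,
    fun x _ => hF' x, fun x _ => abelScale_ne_zero x, ?_⟩ <;> rw [← Real.ball_eq_Ioo]
  · exact mem_ball_self hδ
  · intro y Y hy hyode hY hYf x hx
    rw [hRFδ x hx]
    refine deriv_eq_cube_add_abelFreeTerm ha ha0 hP (hshift.differentiable (by simp) x)
      (hyode x hx ▸ (hy x hx).hasDerivAt) (hY x hx) ?_
    filter_upwards [isOpen_ball.mem_nhds hx] using hYf
end

section
/- Let a, b, c, d : ℝ → ℝ be smooth with a(x) ≠ 0 for all x, and suppose the relative invariant s₃ = a'b − b'a + abc − (2/9)b³ − 3a²d vanishes identically. Then for every x₀ ∈ ℝ there exist an open interval V containing x₀ and smooth functions f, g, h : V → ℝ with f' ≠ 0 and g ≠ 0 on V, such that for every differentiable y : V → ℝ satisfying y'(x) = a(x)·y(x)³ + b(x)·y(x)² + c(x)·y(x) + d(x) on V and every differentiable Y with Y(f(x)) = g(x)·y(x) + h(x) for all x ∈ V, one has Y'(f(x)) = Y(f(x))³ for all x ∈ V. In particular, all Abel equations satisfying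 s₃ = 0 are locally equivalent to Y' = Y³, hence to each other. -/
/-!
Put `q = y + b/(3a)`. This shift kills the quadratic term, and a direct computation gives
`q' = a q³ + p q - s₃/(3a²)` with `p = c - b²/(3a)`. When `s₃ = 0`, the integrating factor
`g = exp (-∫ p)` turns this into `(g q)' = (a/g²) (g q)³`, so reparametrising time by
`f = ∫ a/g²` gives `Y' = Y³` for `Y ∘ f = g q = g y + g b/(3a)`.
-/

open Filter Topology

theorem ContDiff.contDiff_succ_intervalIntegral {E : Type*} [NormedAddCommGroup E]
    [NormedSpace ℝ E] [CompleteSpace E] {n : ℕ∞} {φ : ℝ → E} (hφ : ContDiff ℝ n φ) (a : ℝ) :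
    ContDiff ℝ (n + 1) (fun u => ∫ t in a..u, φ t) := by
  refine contDiff_succ_iff_deriv.mpr ⟨fun u => ?_, by simp, ?_⟩
  · exact (hφ.continuous.integral_hasStrictDerivAt a u).hasDerivAt.differentiableAt
  · rwa [funext (hφ.continuous.deriv_integral φ a)]

theorem exists_contDiff_pos_hasDerivAt_neg_mul {n : ℕ∞} {p : ℝ → ℝ} (hp : ContDiff ℝ n p) :
    ∃ g : ℝ → ℝ, ContDiff ℝ n g ∧ (∀ x, 0 < g x) ∧ ∀ x, HasDerivAt g (-p x * g x) x := by
  refine ⟨fun x => Real.exp (-∫ t in (0 : ℝ)..x, p t), ?_, fun x => Real.exp_pos _,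
    fun x => ?_⟩
  · exact Real.contDiff_exp.comp (hp.contDiff_succ_intervalIntegral 0).of_succ.neg
  · have := ((hp.continuous.integral_hasStrictDerivAt 0 x).hasDerivAt.neg).exp
    rwa [mul_comm] at this

section

variable {𝕜 : Type*} [NontriviallyNormedField 𝕜]

theorem HasDerivAt.abel_shift [CharZero 𝕜] {y a b : 𝕜 → 𝕜} {c d a' b' x : 𝕜}
    (hy : HasDerivAt y (a x * y x ^ 3 + b x * y x ^ 2 + c * y x + d) x)
    (ha : HasDerivAt a a' x) (hb : HasDerivAt b b' x) (ha0 : a x ≠ 0) :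
    HasDerivAt (fun t => y t + b t / (3 * a t))
      (a x * (y x + b x / (3 * a x)) ^ 3 + (c - b x ^ 2 / (3 * a x)) * (y x + b x / (3 * a x))
        - (a' * b x - b' * a x + a x * b x * c - (2/9) * b x ^ 3 - 3 * a x ^ 2 * d)
          / (3 * a x ^ 2)) x := by
  have ha3 : 3 * a x ≠ 0 := mul_ne_zero three_ne_zero ha0
  refine (hy.add (hb.div (ha.const_mul 3) ha3)).congr_deriv ?_
  field_simp
  ring

theorem HasDerivAt.mul_integrating_factor {q g : 𝕜 → 𝕜} {A p x : 𝕜}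
    (hq : HasDerivAt q (A * q x ^ 3 + p * q x) x) (hg : HasDerivAt g (-p * g x) x)
    (hg0 : g x ≠ 0) :
    HasDerivAt (fun t => g t * q t) ((g x * q x) ^ 3 * (A / g x ^ 2)) x := by
  refine (hg.mul hq).congr_deriv ?_
  field_simp
  ring

theorem deriv_eq_of_comp_eventuallyEq {Y f w : 𝕜 → 𝕜} {f' W x : 𝕜}
    (hY : DifferentiableAt 𝕜 Y (f x)) (hf : HasDerivAt f f' x) (hf0 : f' ≠ 0)
    (hw : HasDerivAt w (W * f') x) (hYw : Y ∘ f =ᶠ[𝓝 x] w) :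
    deriv Y (f x) = W :=
  mul_right_cancel₀ hf0 <| (hY.hasDerivAt.comp x hf).unique (hw.congr_of_eventuallyEq hYw)

end

theorem abel_s3_zero_locally_equivalent_to_Y3_general
    (a b c d : ℝ → ℝ)
    (ha : ContDiff ℝ (⊤ : ℕ∞) a) (hb : ContDiff ℝ (⊤ : ℕ∞) b)
    (hc : ContDiff ℝ (⊤ : ℕ∞) c)
    (ha0 : ∀ x, a x ≠ 0)
    (hs3 : ∀ x, deriv a x * b x - deriv b x * a x + a x * b x * c x
      - (2/9) * b x ^ 3 - 3 * a x ^ 2 * d x = 0) :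
    ∀ x₀ : ℝ, ∃ (u v : ℝ) (f g h : ℝ → ℝ),
      x₀ ∈ Set.Ioo u v
      ∧ ContDiffOn ℝ (⊤ : ℕ∞) f (Set.Ioo u v)
      ∧ ContDiffOn ℝ (⊤ : ℕ∞) g (Set.Ioo u v)
      ∧ ContDiffOn ℝ (⊤ : ℕ∞) h (Set.Ioo u v)
      ∧ (∀ x ∈ Set.Ioo u v, deriv f x ≠ 0)
      ∧ (∀ x ∈ Set.Ioo u v, g x ≠ 0)
      ∧ ∀ y Y : ℝ → ℝ,
          (∀ x ∈ Set.Ioo u v, DifferentiableAt ℝ y x) →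
          (∀ x ∈ Set.Ioo u v, deriv y x
            = a x * y x ^ 3 + b x * y x ^ 2 + c x * y x + d x) →
          (∀ x ∈ Set.Ioo u v, DifferentiableAt ℝ Y (f x)) →
          (∀ x ∈ Set.Ioo u v, Y (f x) = g x * y x + h x) →
          ∀ x ∈ Set.Ioo u v, deriv Y (f x) = Y (f x) ^ 3 := by
  intro x₀
  have ha3 : ∀ x, 3 * a x ≠ 0 := fun x => mul_ne_zero three_ne_zero (ha0 x)
  have ha' : ∀ x, HasDerivAt a (deriv a x) x := fun x => (ha.differentiable (by simp) x).hasDerivAt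
  have hb' : ∀ x, HasDerivAt b (deriv b x) x := fun x => (hb.differentiable (by simp) x).hasDerivAt
  obtain ⟨g, hg, hg0, hg'⟩ := exists_contDiff_pos_hasDerivAt_neg_mul
    (p := fun x => c x - b x ^ 2 / (3 * a x)) (hc.sub ((hb.pow 2).div (contDiff_const.mul ha) ha3))
  set f : ℝ → ℝ := fun u => ∫ t in (0 : ℝ)..u, a t / g t ^ 2
  have hf : ContDiff ℝ (⊤ : ℕ∞) (fun x => a x / g x ^ 2) :=
    ha.div (hg.pow 2) fun x => (pow_pos (hg0 x) 2).ne'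
  have hf0 (x : ℝ) : a x / g x ^ 2 ≠ 0 := div_ne_zero (ha0 x) (pow_pos (hg0 x) 2).ne'
  have hf' (x : ℝ) : HasDerivAt f (a x / g x ^ 2) x :=
    (hf.continuous.integral_hasStrictDerivAt 0 x).hasDerivAt
  refine ⟨x₀ - 1, x₀ + 1, f, g, fun x => g x * b x / (3 * a x), by simp,
    (hf.contDiff_succ_intervalIntegral 0).of_succ.contDiffOn, hg.contDiffOn,
    ((hg.mul hb).div (contDiff_const.mul ha) ha3).contDiffOn,
    fun x _ => (hf' x).deriv ▸ hf0 x, fun x _ => (hg0 x).ne', fun y Y hy hy' hY hYf x hx => ?_⟩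
  have hq := ((hy x hx).hasDerivAt.congr_deriv (hy' x hx)).abel_shift (ha' x) (hb' x) (ha0 x)
  rw [hs3 x, zero_div, sub_zero] at hq
  have hYgq : Y ∘ f =ᶠ[𝓝 x] fun t => g t * (y t + b t / (3 * a t)) := by
    filter_upwards [Ioo_mem_nhds hx.1 hx.2] with t ht
    rw [Function.comp_apply, hYf t ht]
    ring
  rw [hYf x hx, deriv_eq_of_comp_eventuallyEq (hY x hx) (hf' x) (hf0 x)
    (hq.mul_integrating_factor (hg' x) (hg0 x).ne') hYgq]
  ring

/-- every Abel equation of the first kind with vanishing relative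
invariant `s₃ = a'b − b'a + abc − (2/9)b³ − 3a²d` is locally equivalent, via a
linear point transformation, to the canonical equation `Y' = Y³`. -/
theorem abel_s3_zero_locally_equivalent_to_Y3
    (a b c d : ℝ → ℝ)
    (ha : ContDiff ℝ (⊤ : ℕ∞) a) (hb : ContDiff ℝ (⊤ : ℕ∞) b)
    (hc : ContDiff ℝ (⊤ : ℕ∞) c) (hd : ContDiff ℝ (⊤ : ℕ∞) d)
    (ha0 : ∀ x, a x ≠ 0)
    (hs3 : ∀ x, deriv a x * b x - deriv b x * a x + a x * b x * c x
      - (2/9) * b x ^ 3 - 3 * a x ^ 2 * d x = 0) :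
    ∀ x₀ : ℝ, ∃ (u v : ℝ) (f g h : ℝ → ℝ),
      x₀ ∈ Set.Ioo u v
      ∧ ContDiffOn ℝ (⊤ : ℕ∞) f (Set.Ioo u v)
      ∧ ContDiffOn ℝ (⊤ : ℕ∞) g (Set.Ioo u v)
      ∧ ContDiffOn ℝ (⊤ : ℕ∞) h (Set.Ioo u v)
      ∧ (∀ x ∈ Set.Ioo u v, deriv f x ≠ 0)
      ∧ (∀ x ∈ Set.Ioo u v, g x ≠ 0)
      ∧ ∀ y Y : ℝ → ℝ,
          (∀ x ∈ Set.Ioo u v, DifferentiableAt ℝ y x) →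
          (∀ x ∈ Set.Ioo u v, deriv y x
            = a x * y x ^ 3 + b x * y x ^ 2 + c x * y x + d x) →
          (∀ x ∈ Set.Ioo u v, DifferentiableAt ℝ Y (f x)) →
          (∀ x ∈ Set.Ioo u v, Y (f x) = g x * y x + h x) →
          ∀ x ∈ Set.Ioo u v, deriv Y (f x) = Y (f x) ^ 3 :=
  abel_s3_zero_locally_equivalent_to_Y3_general a b c d ha hb hc ha0 hs3
end

section
/- Let a, b, c, f, g, h : ℝ → ℝ be smooth with f' ≠ 0 and g ≠ 0 everywhere, and let A, B, C : ℝ → ℝ satisfy, for all x: A(f(x)) = a/(f'·g³), B(f(x)) = (b·g − 4a·h)/(f'·g³), C(f(x)) = (6a·h² − 3b·g·h + c·g²)/(f'·g³) (right-hand sides evaluated at x). Then for all x, (8·A·C − 3·B²)(f(x)) = (8·a(x)·c(x) − 3·b(x)²) / (f'(x)²·g(x)⁴). That is, I₁ = 8ac − 3b² is a relative invariant of the generalized Abel equation of degree 4 under linear point transformations. -/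
/-! The `h`-terms cancel in the numerator of `8AC - 3B²`, leaving `g²(8ac - 3b²)`. -/

theorem abel_deg4_I1_numerator {R : Type*} [CommRing R] (a b c g h : R) :
    8 * a * (6 * a * h ^ 2 - 3 * b * g * h + c * g ^ 2) - 3 * (b * g - 4 * a * h) ^ 2
      = g ^ 2 * (8 * a * c - 3 * b ^ 2) := by
  ring

theorem abel_deg4_I1_transform {K : Type*} [Field K] (a b c g h k : K) (hg : g ≠ 0) :
    8 * (a / (k * g ^ 3)) * ((6 * a * h ^ 2 - 3 * b * g * h + c * g ^ 2) / (k * g ^ 3))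
        - 3 * ((b * g - 4 * a * h) / (k * g ^ 3)) ^ 2
      = (8 * a * c - 3 * b ^ 2) / (k ^ 2 * g ^ 4) :=
  calc _ = (8 * a * (6 * a * h ^ 2 - 3 * b * g * h + c * g ^ 2) - 3 * (b * g - 4 * a * h) ^ 2)
          / (g ^ 2 * (k ^ 2 * g ^ 4)) := by ring
    _ = _ := by rw [abel_deg4_I1_numerator, mul_div_mul_left _ _ (pow_ne_zero 2 hg)]

theorem abel_deg4_I1_relative_invariant_general
    (a b c f g h A B C : ℝ → ℝ)
    (hg0 : ∀ x, g x ≠ 0)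
    (hAe : ∀ x, A (f x) = a x / (deriv f x * g x ^ 3))
    (hBe : ∀ x, B (f x) = (b x * g x - 4 * a x * h x) / (deriv f x * g x ^ 3))
    (hCe : ∀ x, C (f x) = (6 * a x * h x ^ 2 - 3 * b x * g x * h x
      + c x * g x ^ 2) / (deriv f x * g x ^ 3)) :
    ∀ x, 8 * A (f x) * C (f x) - 3 * B (f x) ^ 2
      = (8 * a x * c x - 3 * b x ^ 2) / (deriv f x ^ 2 * g x ^ 4) := by
  intro x
  rw [hAe, hBe, hCe]
  exact abel_deg4_I1_transform _ _ _ _ _ _ (hg0 x)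

/-- `I₁ = 8ac − 3b²` is a relative invariant of the generalized
Abel equation of degree 4 under linear point transformations. -/
theorem abel_deg4_I1_relative_invariant
    (a b c f g h A B C : ℝ → ℝ)
    (ha : ContDiff ℝ (⊤ : ℕ∞) a) (hb : ContDiff ℝ (⊤ : ℕ∞) b)
    (hc : ContDiff ℝ (⊤ : ℕ∞) c)
    (hf : ContDiff ℝ (⊤ : ℕ∞) f) (hg : ContDiff ℝ (⊤ : ℕ∞) g)
    (hh : ContDiff ℝ (⊤ : ℕ∞) h)
    (hf' : ∀ x, deriv f x ≠ 0) (hg0 : ∀ x, g x ≠ 0)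
    (hAe : ∀ x, A (f x) = a x / (deriv f x * g x ^ 3))
    (hBe : ∀ x, B (f x) = (b x * g x - 4 * a x * h x) / (deriv f x * g x ^ 3))
    (hCe : ∀ x, C (f x) = (6 * a x * h x ^ 2 - 3 * b x * g x * h x
      + c x * g x ^ 2) / (deriv f x * g x ^ 3)) :
    ∀ x, 8 * A (f x) * C (f x) - 3 * B (f x) ^ 2
      = (8 * a x * c x - 3 * b x ^ 2) / (deriv f x ^ 2 * g x ^ 4) :=
  abel_deg4_I1_relative_invariant_general a b c f g h A B C hg0 hAe hBe hCe
end

section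
/- Let a, b, c, d, e, f, g, h : ℝ → ℝ be smooth with f' ≠ 0 and g ≠ 0 everywhere, and let A, B, C, D, E : ℝ → ℝ be differentiable and satisfy, for all x: A(f(x)) = a/(f'·g³), B(f(x)) = (b·g − 4a·h)/(f'·g³), C(f(x)) = (6a·h² − 3b·g·h + c·g²)/(f'·g³), D(f(x)) = (−4a·h³ + 3b·g·h² − 2c·g²·h + d·g³ + g'·g²)/(f'·g³), E(f(x)) = (a·h⁴ − b·g·h³ + c·g²·h² − d·g³·h + e·g⁴ + h'·g³ − g'·g²·h)/(f'·g³). Then the quantity I₂ = 3(a·b' − a'·b) + a·c² − 3a·b·d + 12a²·e is a relative invariant of weight (f')³·g⁵: for all x, (3(A·B' − A'·B) + A·C² − 3A·B·D + 12A²·E)(f(x)) = I₂(x) / (f'(x)³·g(x)⁵). -/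
/-!
Write `w = f'·g³`. The transformation laws say `A ∘ f = a / w` and `B ∘ f = (b·g − 4a·h) / w`,
so by the chain rule the Wronskian `A·B' − A'·B` at `f x` is the Wronskian of these two
quotients divided by `f'`; for quotients with a common denominator the derivative of `w`
cancels, leaving `(a·β' − a'·β) / (f'·w²)` with `β = b·g − 4a·h`. In particular no second
derivative of `f` survives, and substituting the laws for `C`, `D`, `E` makes the remaining
identity a rational-function identity in the values of `a, b, c, d, e, g, h` and their first
derivatives.
-/

theorem deriv_eq_div_of_comp_eq {A f φ : ℝ → ℝ} {x f' φ' : ℝ}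
    (hA : DifferentiableAt ℝ A (f x)) (hf : HasDerivAt f f' x) (hf' : f' ≠ 0)
    (hφ : HasDerivAt φ φ' x) (hAf : A ∘ f = φ) :
    deriv A (f x) = φ' / f' := by
  have hcomp : HasDerivAt φ (deriv A (f x) * f') x := hAf ▸ hA.hasDerivAt.comp x hf
  exact eq_div_of_mul_eq hf' (hcomp.unique hφ)

theorem wronskian_comp_eq_of_comp_eq_div {A B f p q w : ℝ → ℝ} {x f' p' q' : ℝ}
    (hA : DifferentiableAt ℝ A (f x)) (hB : DifferentiableAt ℝ B (f x))
    (hf : HasDerivAt f f' x) (hf' : f' ≠ 0)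
    (hp : HasDerivAt p p' x) (hq : HasDerivAt q q' x)
    (hw : DifferentiableAt ℝ w x) (hw0 : w x ≠ 0)
    (hAf : A ∘ f = fun y => p y / w y) (hBf : B ∘ f = fun y => q y / w y) :
    A (f x) * deriv B (f x) - deriv A (f x) * B (f x)
      = (p x * q' - p' * q x) / (f' * w x ^ 2) := by
  have hAx : A (f x) = p x / w x := congrFun hAf x
  have hBx : B (f x) = q x / w x := congrFun hBf x
  rw [deriv_eq_div_of_comp_eq hA hf hf' (hp.div hw.hasDerivAt hw0) hAf,
    deriv_eq_div_of_comp_eq hB hf hf' (hq.div hw.hasDerivAt hw0) hBf, hAx, hBx]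
  field_simp
  ring

theorem abel_deg4_I2_relative_invariant_general
    (a b c d e f g h A B C D E : ℝ → ℝ)
    (ha : ContDiff ℝ (⊤ : ℕ∞) a) (hb : ContDiff ℝ (⊤ : ℕ∞) b)
    (hf : ContDiff ℝ (⊤ : ℕ∞) f) (hg : ContDiff ℝ (⊤ : ℕ∞) g)
    (hh : ContDiff ℝ (⊤ : ℕ∞) h)
    (hf' : ∀ x, deriv f x ≠ 0) (hg0 : ∀ x, g x ≠ 0)
    (hA : Differentiable ℝ A) (hB : Differentiable ℝ B)
    (hAe : ∀ x, A (f x) = a x / (deriv f x * g x ^ 3))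
    (hBe : ∀ x, B (f x) = (b x * g x - 4 * a x * h x) / (deriv f x * g x ^ 3))
    (hCe : ∀ x, C (f x) = (6 * a x * h x ^ 2 - 3 * b x * g x * h x
      + c x * g x ^ 2) / (deriv f x * g x ^ 3))
    (hDe : ∀ x, D (f x) = (-4 * a x * h x ^ 3 + 3 * b x * g x * h x ^ 2
      - 2 * c x * g x ^ 2 * h x + d x * g x ^ 3 + deriv g x * g x ^ 2)
      / (deriv f x * g x ^ 3))
    (hEe : ∀ x, E (f x) = (a x * h x ^ 4 - b x * g x * h x ^ 3
      + c x * g x ^ 2 * h x ^ 2 - d x * g x ^ 3 * h x + e x * g x ^ 4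
      + deriv h x * g x ^ 3 - deriv g x * g x ^ 2 * h x)
      / (deriv f x * g x ^ 3)) :
    ∀ x, 3 * (A (f x) * deriv B (f x) - deriv A (f x) * B (f x))
        + A (f x) * C (f x) ^ 2 - 3 * A (f x) * B (f x) * D (f x)
        + 12 * A (f x) ^ 2 * E (f x)
      = (3 * (a x * deriv b x - deriv a x * b x) + a x * c x ^ 2
          - 3 * a x * b x * d x + 12 * a x ^ 2 * e x)
        / (deriv f x ^ 3 * g x ^ 5) := by
  intro x
  have hda := (ha.differentiable (by simp) x).hasDerivAt
  have hdb := (hb.differentiable (by simp) x).hasDerivAt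
  have hdg := (hg.differentiable (by simp) x).hasDerivAt
  have hdh := (hh.differentiable (by simp) x).hasDerivAt
  have hdf := (hf.differentiable (by simp) x).hasDerivAt
  have hdf' : DifferentiableAt ℝ (deriv f) x :=
    (contDiff_infty_iff_deriv.mp hf).2.differentiable (by simp) x
  have hw0 : deriv f x * g x ^ 3 ≠ 0 := mul_ne_zero (hf' x) (pow_ne_zero 3 (hg0 x))
  have hwronskian := wronskian_comp_eq_of_comp_eq_div (q := fun y => b y * g y - 4 * a y * h y)
    (w := fun y => deriv f y * g y ^ 3) (hA (f x)) (hB (f x)) hdf (hf' x) hda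
    ((hdb.mul hdg).sub ((hda.const_mul 4).mul hdh)) (hdf'.mul ((hdg.pow 3).differentiableAt))
    hw0 (funext hAe) (funext hBe)
  rw [hwronskian, hAe, hBe, hCe, hDe, hEe]
  field_simp [hf' x, hg0 x]
  ring

/-- `I₂ = 3(ab' − a'b) + ac² − 3abd + 12a²e` is a relative
invariant of weight `(f')³·g⁵` of the generalized Abel equation of degree 4
under linear point transformations. -/
theorem abel_deg4_I2_relative_invariant
    (a b c d e f g h A B C D E : ℝ → ℝ)
    (ha : ContDiff ℝ (⊤ : ℕ∞) a) (hb : ContDiff ℝ (⊤ : ℕ∞) b)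
    (hc : ContDiff ℝ (⊤ : ℕ∞) c) (hd : ContDiff ℝ (⊤ : ℕ∞) d)
    (he : ContDiff ℝ (⊤ : ℕ∞) e)
    (hf : ContDiff ℝ (⊤ : ℕ∞) f) (hg : ContDiff ℝ (⊤ : ℕ∞) g)
    (hh : ContDiff ℝ (⊤ : ℕ∞) h)
    (hf' : ∀ x, deriv f x ≠ 0) (hg0 : ∀ x, g x ≠ 0)
    (hA : Differentiable ℝ A) (hB : Differentiable ℝ B)
    (hC : Differentiable ℝ C) (hD : Differentiable ℝ D)
    (hE : Differentiable ℝ E)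
    (hAe : ∀ x, A (f x) = a x / (deriv f x * g x ^ 3))
    (hBe : ∀ x, B (f x) = (b x * g x - 4 * a x * h x) / (deriv f x * g x ^ 3))
    (hCe : ∀ x, C (f x) = (6 * a x * h x ^ 2 - 3 * b x * g x * h x
      + c x * g x ^ 2) / (deriv f x * g x ^ 3))
    (hDe : ∀ x, D (f x) = (-4 * a x * h x ^ 3 + 3 * b x * g x * h x ^ 2
      - 2 * c x * g x ^ 2 * h x + d x * g x ^ 3 + deriv g x * g x ^ 2)
      / (deriv f x * g x ^ 3))
    (hEe : ∀ x, E (f x) = (a x * h x ^ 4 - b x * g x * h x ^ 3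
      + c x * g x ^ 2 * h x ^ 2 - d x * g x ^ 3 * h x + e x * g x ^ 4
      + deriv h x * g x ^ 3 - deriv g x * g x ^ 2 * h x)
      / (deriv f x * g x ^ 3)) :
    ∀ x, 3 * (A (f x) * deriv B (f x) - deriv A (f x) * B (f x))
        + A (f x) * C (f x) ^ 2 - 3 * A (f x) * B (f x) * D (f x)
        + 12 * A (f x) ^ 2 * E (f x)
      = (3 * (a x * deriv b x - deriv a x * b x) + a x * c x ^ 2
          - 3 * a x * b x * d x + 12 * a x ^ 2 * e x)
        / (deriv f x ^ 3 * g x ^ 5) :=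
  abel_deg4_I2_relative_invariant_general a b c d e f g h A B C D E ha hb hf hg hh hf' hg0 hA hB hAe
    hBe hCe hDe hEe
end

section
/- Let a, b, c, d, e, f, g, h : ℝ → ℝ be smooth with f' ≠ 0 and g ≠ 0 everywhere, and let A, B, C, D, E : ℝ → ℝ be differentiable and satisfy the degree-4 transformation identities A(f(x)) = a/(f'·g³), B(f(x)) = (b·g − 4a·h)/(f'·g³), C(f(x)) = (6a·h² − 3b·g·h + c·g²)/(f'·g³), D(f(x)) = (−4a·h³ + 3b·g·h² − 2c·g²·h + d·g³ + g'·g²)/(f'·g³), E(f(x)) = (a·h⁴ − b·g·h³ + c·g²·h² − d·g³·h + e·g⁴ + h'·g³ − g'·g²·h)/(f'·g³). Then the quantity I₃ = 8a·a'·(4ac − 3b²) + 24a²·b·b' − 32a³·c' − 3b⁵ + 64a³·c·d − 24a²·b²·d − 32a²·b·c² + 20a·b³·c is a relative invariant of weight (f')⁵·g¹⁰: for all x, the same expression formed from (A,B,C,D,E) evaluated at f(x) equals I₃(x) / (f'(x)⁵·g(x)¹⁰). -/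
/-! The invariance is a direct computation. Differentiating `A (f y) = a y / (f' y · g y ³)` (and
likewise for `B`, `C`) by the chain rule expresses `A' (f x)`, `B' (f x)`, `C' (f x)` through
`a, b, c, g, h`, their first derivatives, `f'` and `f''`. Substituting everything into `I₃` of the
transformed equation, the terms in `f''`, `g'` and `h'` cancel and what remains is `I₃` divided by
`(f')⁵ g¹⁰`. -/

def abelI3 (a b c d a' b' c' : ℝ) : ℝ :=
  8 * a * a' * (4 * a * c - 3 * b ^ 2) + 24 * a ^ 2 * b * b' - 32 * a ^ 3 * c' - 3 * b ^ 5
    + 64 * a ^ 3 * c * d - 24 * a ^ 2 * b ^ 2 * d - 32 * a ^ 2 * b * c ^ 2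
    + 20 * a * b ^ 3 * c

lemma deriv_comp_eq_of_comp_eq_div {F f p q : ℝ → ℝ} {x p' q' : ℝ}
    (hF : DifferentiableAt ℝ F (f x)) (hf : DifferentiableAt ℝ f x) (hf₀ : deriv f x ≠ 0)
    (hp : HasDerivAt p p' x) (hq : HasDerivAt q q' x) (hq₀ : q x ≠ 0)
    (heq : ∀ y, F (f y) = p y / q y) :
    deriv F (f x) = (p' * q x - p x * q') / q x ^ 2 / deriv f x := by
  have hcomp : HasDerivAt (F ∘ f) (deriv F (f x) * deriv f x) x :=
    hF.hasDerivAt.comp x hf.hasDerivAt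
  rw [show F ∘ f = fun y => p y / q y from funext heq] at hcomp
  rw [eq_div_iff hf₀]
  exact hcomp.unique (hp.div hq hq₀)

/-- `f₁, f₂` stand for `f', f''`, and `q, q'` for the common denominator `f' g³` and its
derivative. -/
lemma abelI3_transform {a b c d a' b' c' f₁ f₂ g g' h h' q q' A B C D A' B' C' : ℝ}
    (hf₁ : f₁ ≠ 0) (hg : g ≠ 0) (hq : q = f₁ * g ^ 3)
    (hq' : q' = f₂ * g ^ 3 + 3 * f₁ * g ^ 2 * g')
    (hA : A = a / q) (hB : B = (b * g - 4 * a * h) / q)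
    (hC : C = (6 * a * h ^ 2 - 3 * b * g * h + c * g ^ 2) / q)
    (hD : D = (-4 * a * h ^ 3 + 3 * b * g * h ^ 2 - 2 * c * g ^ 2 * h + d * g ^ 3 + g' * g ^ 2) / q)
    (hA' : A' = (a' * q - a * q') / q ^ 2 / f₁)
    (hB' : B' = ((b' * g + b * g' - 4 * (a' * h + a * h')) * q - (b * g - 4 * a * h) * q')
      / q ^ 2 / f₁)
    (hC' : C' = ((6 * a' * h ^ 2 + 12 * a * h * h' - 3 * (b' * g * h + b * g' * h + b * g * h')
        + c' * g ^ 2 + 2 * c * g * g') * q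
      - (6 * a * h ^ 2 - 3 * b * g * h + c * g ^ 2) * q') / q ^ 2 / f₁) :
    abelI3 A B C D A' B' C' = abelI3 a b c d a' b' c' / (f₁ ^ 5 * g ^ 10) := by
  subst hq hq' hA hB hC hD hA' hB' hC'
  unfold abelI3
  field_simp
  ring

theorem abel_deg4_I3_relative_invariant_general
    (a b c d f g h A B C D : ℝ → ℝ)
    (ha : ContDiff ℝ (⊤ : ℕ∞) a) (hb : ContDiff ℝ (⊤ : ℕ∞) b)
    (hc : ContDiff ℝ (⊤ : ℕ∞) c)
    (hf : ContDiff ℝ (⊤ : ℕ∞) f) (hg : ContDiff ℝ (⊤ : ℕ∞) g)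
    (hh : ContDiff ℝ (⊤ : ℕ∞) h)
    (hf' : ∀ x, deriv f x ≠ 0) (hg0 : ∀ x, g x ≠ 0)
    (hA : Differentiable ℝ A) (hB : Differentiable ℝ B)
    (hC : Differentiable ℝ C)
    (hAe : ∀ x, A (f x) = a x / (deriv f x * g x ^ 3))
    (hBe : ∀ x, B (f x) = (b x * g x - 4 * a x * h x) / (deriv f x * g x ^ 3))
    (hCe : ∀ x, C (f x) = (6 * a x * h x ^ 2 - 3 * b x * g x * h x
      + c x * g x ^ 2) / (deriv f x * g x ^ 3))
    (hDe : ∀ x, D (f x) = (-4 * a x * h x ^ 3 + 3 * b x * g x * h x ^ 2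
      - 2 * c x * g x ^ 2 * h x + d x * g x ^ 3 + deriv g x * g x ^ 2)
      / (deriv f x * g x ^ 3)) :
    ∀ x, 8 * A (f x) * deriv A (f x)
          * (4 * A (f x) * C (f x) - 3 * B (f x) ^ 2)
        + 24 * A (f x) ^ 2 * B (f x) * deriv B (f x)
        - 32 * A (f x) ^ 3 * deriv C (f x) - 3 * B (f x) ^ 5
        + 64 * A (f x) ^ 3 * C (f x) * D (f x)
        - 24 * A (f x) ^ 2 * B (f x) ^ 2 * D (f x)
        - 32 * A (f x) ^ 2 * B (f x) * C (f x) ^ 2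
        + 20 * A (f x) * B (f x) ^ 3 * C (f x)
      = (8 * a x * deriv a x * (4 * a x * c x - 3 * b x ^ 2)
          + 24 * a x ^ 2 * b x * deriv b x - 32 * a x ^ 3 * deriv c x
          - 3 * b x ^ 5 + 64 * a x ^ 3 * c x * d x
          - 24 * a x ^ 2 * b x ^ 2 * d x - 32 * a x ^ 2 * b x * c x ^ 2
          + 20 * a x * b x ^ 3 * c x)
        / (deriv f x ^ 5 * g x ^ 10) := by
  intro x
  have hasDerivAt_of {u : ℝ → ℝ} (hu : ContDiff ℝ (⊤ : ℕ∞) u) : HasDerivAt u (deriv u x) x :=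
    (hu.differentiable (by simp) x).hasDerivAt
  have hfx : DifferentiableAt ℝ f x := hf.differentiable (by simp) x
  have hf'x := hasDerivAt_of (contDiff_infty_iff_deriv.mp hf).2
  have hax := hasDerivAt_of ha
  have hbx := hasDerivAt_of hb
  have hcx := hasDerivAt_of hc
  have hgx := hasDerivAt_of hg
  have hhx := hasDerivAt_of hh
  have hq : HasDerivAt (fun y => deriv f y * g y ^ 3)
      (deriv (deriv f) x * g x ^ 3 + 3 * deriv f x * g x ^ 2 * deriv g x) x :=
    (hf'x.fun_mul (hgx.fun_pow 3)).congr_deriv (by push_cast; ring)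
  have hq₀ : deriv f x * g x ^ 3 ≠ 0 := mul_ne_zero (hf' x) (pow_ne_zero 3 (hg0 x))
  have hpB : HasDerivAt (fun y => b y * g y - 4 * a y * h y)
      (deriv b x * g x + b x * deriv g x - 4 * (deriv a x * h x + a x * deriv h x)) x :=
    ((hbx.fun_mul hgx).sub ((hax.const_mul 4).fun_mul hhx)).congr_deriv (by ring)
  have hpC : HasDerivAt (fun y => 6 * a y * h y ^ 2 - 3 * b y * g y * h y + c y * g y ^ 2)
      (6 * deriv a x * h x ^ 2 + 12 * a x * h x * deriv h x
        - 3 * (deriv b x * g x * h x + b x * deriv g x * h x + b x * g x * deriv h x)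
        + deriv c x * g x ^ 2 + 2 * c x * g x * deriv g x) x :=
    ((((hax.const_mul 6).fun_mul (hhx.fun_pow 2)).sub
      (((hbx.const_mul 3).fun_mul hgx).fun_mul hhx)).add
        (hcx.fun_mul (hgx.fun_pow 2))).congr_deriv (by push_cast; ring)
  exact abelI3_transform (hf' x) (hg0 x) rfl rfl (hAe x) (hBe x) (hCe x) (hDe x)
    (deriv_comp_eq_of_comp_eq_div (hA _) hfx (hf' x) hax hq hq₀ hAe)
    (deriv_comp_eq_of_comp_eq_div (hB _) hfx (hf' x) hpB hq hq₀ hBe)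
    (deriv_comp_eq_of_comp_eq_div (hC _) hfx (hf' x) hpC hq hq₀ hCe)

/-- `I₃ = 8aa'(4ac − 3b²) + 24a²bb' − 32a³c' − 3b⁵ + 64a³cd
− 24a²b²d − 32a²bc² + 20ab³c` is a relative invariant of weight `(f')⁵·g¹⁰`
of the generalized Abel equation of degree 4. -/
theorem abel_deg4_I3_relative_invariant
    (a b c d e f g h A B C D E : ℝ → ℝ)
    (ha : ContDiff ℝ (⊤ : ℕ∞) a) (hb : ContDiff ℝ (⊤ : ℕ∞) b)
    (hc : ContDiff ℝ (⊤ : ℕ∞) c) (hd : ContDiff ℝ (⊤ : ℕ∞) d)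
    (he : ContDiff ℝ (⊤ : ℕ∞) e)
    (hf : ContDiff ℝ (⊤ : ℕ∞) f) (hg : ContDiff ℝ (⊤ : ℕ∞) g)
    (hh : ContDiff ℝ (⊤ : ℕ∞) h)
    (hf' : ∀ x, deriv f x ≠ 0) (hg0 : ∀ x, g x ≠ 0)
    (hA : Differentiable ℝ A) (hB : Differentiable ℝ B)
    (hC : Differentiable ℝ C) (hD : Differentiable ℝ D)
    (hE : Differentiable ℝ E)
    (hAe : ∀ x, A (f x) = a x / (deriv f x * g x ^ 3))
    (hBe : ∀ x, B (f x) = (b x * g x - 4 * a x * h x) / (deriv f x * g x ^ 3))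
    (hCe : ∀ x, C (f x) = (6 * a x * h x ^ 2 - 3 * b x * g x * h x
      + c x * g x ^ 2) / (deriv f x * g x ^ 3))
    (hDe : ∀ x, D (f x) = (-4 * a x * h x ^ 3 + 3 * b x * g x * h x ^ 2
      - 2 * c x * g x ^ 2 * h x + d x * g x ^ 3 + deriv g x * g x ^ 2)
      / (deriv f x * g x ^ 3))
    (hEe : ∀ x, E (f x) = (a x * h x ^ 4 - b x * g x * h x ^ 3
      + c x * g x ^ 2 * h x ^ 2 - d x * g x ^ 3 * h x + e x * g x ^ 4
      + deriv h x * g x ^ 3 - deriv g x * g x ^ 2 * h x)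
      / (deriv f x * g x ^ 3)) :
    ∀ x, 8 * A (f x) * deriv A (f x)
          * (4 * A (f x) * C (f x) - 3 * B (f x) ^ 2)
        + 24 * A (f x) ^ 2 * B (f x) * deriv B (f x)
        - 32 * A (f x) ^ 3 * deriv C (f x) - 3 * B (f x) ^ 5
        + 64 * A (f x) ^ 3 * C (f x) * D (f x)
        - 24 * A (f x) ^ 2 * B (f x) ^ 2 * D (f x)
        - 32 * A (f x) ^ 2 * B (f x) * C (f x) ^ 2
        + 20 * A (f x) * B (f x) ^ 3 * C (f x)
      = (8 * a x * deriv a x * (4 * a x * c x - 3 * b x ^ 2)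
          + 24 * a x ^ 2 * b x * deriv b x - 32 * a x ^ 3 * deriv c x
          - 3 * b x ^ 5 + 64 * a x ^ 3 * c x * d x
          - 24 * a x ^ 2 * b x ^ 2 * d x - 32 * a x ^ 2 * b x * c x ^ 2
          + 20 * a x * b x ^ 3 * c x)
        / (deriv f x ^ 5 * g x ^ 10) :=
  abel_deg4_I3_relative_invariant_general a b c d f g h A B C D ha hb hc hf hg hh hf' hg0 hA hB hC
    hAe hBe hCe hDe
end

section
/- Let a, b, c, f, g, h : ℝ → ℝ be smooth with f' > 0 and g ≠ 0 everywhere, and let A, B, C : ℝ → ℝ satisfy A(f(x)) = a/(f'·g³), B(f(x)) = (b·g − 4a·h)/(f'·g³), C(f(x)) = (6a·h² − 3b·g·h + c·g²)/(f'·g³) for all x. Define I₀ = a, I₁ = 8ac − 3b², and Ĩ₀ = A, Ĩ₁ = 8AC − 3B², and assume I₁ ≠ 0 on an open interval U. Let I, Ĩ : ℝ → ℝ be differentiable with Ĩ(f(x)) = I(x) for all x ∈ U. Then for all x ∈ U, ( (Ĩ₀² / |Ĩ₁|^{3/2}) · Ĩ' )(f(x)) = ( I₀(x)² / |I₁(x)|^{3/2}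 ) · I'(x). That is, ∇ = (I₀²/|I₁|^{3/2})·d/dx is an invariant derivation for generalized Abel equations of degree 4. -/
/-!
Write `s = f' g²`. The transformation multiplies `I₀` by `1 / (s g)` and `I₁` by `1 / s²`, so the
coefficient `I₀² / |I₁|^{3/2}` gets multiplied by `s³ / (s² g²) = f'`. The chain rule divides the
derivative of a matching invariant by `f'`, and the two factors cancel.
-/

namespace AbelDeg4

def I₁ (a b c : ℝ) : ℝ := 8 * a * c - 3 * b ^ 2

noncomputable def derivationCoeff (a b c : ℝ) : ℝ := a ^ 2 / |I₁ a b c| ^ ((3 : ℝ) / 2)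

theorem I₁_transform (a b c g h D : ℝ) (hD : D ≠ 0) (hg : g ≠ 0) :
    I₁ (a / (D * g ^ 3)) ((b * g - 4 * a * h) / (D * g ^ 3))
        ((6 * a * h ^ 2 - 3 * b * g * h + c * g ^ 2) / (D * g ^ 3))
      = I₁ a b c / (D * g ^ 2) ^ 2 := by
  unfold I₁
  field_simp
  ring

theorem sq_rpow_three_halves {s : ℝ} (hs : 0 ≤ s) : (s ^ 2) ^ ((3 : ℝ) / 2) = s ^ 3 := by
  rw [← Real.rpow_natCast, ← Real.rpow_mul hs]
  norm_num

theorem derivationCoeff_transform (a b c g h D : ℝ) (hD : 0 < D) (hg : g ≠ 0) :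
    derivationCoeff (a / (D * g ^ 3)) ((b * g - 4 * a * h) / (D * g ^ 3))
        ((6 * a * h ^ 2 - 3 * b * g * h + c * g ^ 2) / (D * g ^ 3))
      = D * derivationCoeff a b c := by
  have hs : 0 < D * g ^ 2 := by positivity
  have hI₁ : |I₁ (a / (D * g ^ 3)) ((b * g - 4 * a * h) / (D * g ^ 3))
        ((6 * a * h ^ 2 - 3 * b * g * h + c * g ^ 2) / (D * g ^ 3))| ^ ((3 : ℝ) / 2)
      = |I₁ a b c| ^ ((3 : ℝ) / 2) / (D * g ^ 2) ^ 3 := by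
    rw [I₁_transform a b c g h D hD.ne' hg, abs_div, abs_of_pos (pow_pos hs 2),
      Real.div_rpow (abs_nonneg _) (by positivity), sq_rpow_three_halves hs.le]
  unfold derivationCoeff
  rw [hI₁]
  field_simp

end AbelDeg4

open AbelDeg4 in
theorem abel_deg4_invariant_derivation_general
    (a b c f g h A B C : ℝ → ℝ)
    (hf' : ∀ x, 0 < deriv f x) (hg0 : ∀ x, g x ≠ 0)
    (hAe : ∀ x, A (f x) = a x / (deriv f x * g x ^ 3))
    (hBe : ∀ x, B (f x) = (b x * g x - 4 * a x * h x) / (deriv f x * g x ^ 3))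
    (hCe : ∀ x, C (f x) = (6 * a x * h x ^ 2 - 3 * b x * g x * h x
      + c x * g x ^ 2) / (deriv f x * g x ^ 3))
    (U : Set ℝ) (hU : ∃ p q : ℝ, U = Set.Ioo p q)
    (I Itil : ℝ → ℝ) (hItil : Differentiable ℝ Itil)
    (hmatch : ∀ x ∈ U, Itil (f x) = I x) :
    ∀ x ∈ U,
      (A (f x) ^ 2 / |8 * A (f x) * C (f x) - 3 * B (f x) ^ 2| ^ ((3:ℝ)/2))
          * deriv Itil (f x)
        = (a x ^ 2 / |8 * a x * c x - 3 * b x ^ 2| ^ ((3:ℝ)/2))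
          * deriv I x := by
  obtain ⟨p, q, rfl⟩ := hU
  intro x hx
  have hcoeff : derivationCoeff (A (f x)) (B (f x)) (C (f x))
      = deriv f x * derivationCoeff (a x) (b x) (c x) := by
    rw [hAe, hBe, hCe]
    exact derivationCoeff_transform _ _ _ _ _ _ (hf' x) (hg0 x)
  have hlocal : Itil ∘ f =ᶠ[nhds x] I :=
    Filter.eventuallyEq_of_mem (Ioo_mem_nhds hx.1 hx.2) hmatch
  have hchain : deriv I x = deriv Itil (f x) * deriv f x := by
    rw [← hlocal.deriv_eq,
      deriv_comp x (hItil (f x)) (differentiableAt_of_deriv_ne_zero (hf' x).ne')]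
  calc derivationCoeff (A (f x)) (B (f x)) (C (f x)) * deriv Itil (f x)
      = derivationCoeff (a x) (b x) (c x) * (deriv Itil (f x) * deriv f x) := by
        rw [hcoeff]; ring
    _ = derivationCoeff (a x) (b x) (c x) * deriv I x := by rw [hchain]

/-- `∇ = (I₀²/|I₁|^{3/2})·d/dx` (with `I₀ = a`,
`I₁ = 8ac − 3b²`) is an invariant derivation for generalized Abel equations of
degree 4. -/
theorem abel_deg4_invariant_derivation
    (a b c f g h A B C : ℝ → ℝ)
    (ha : ContDiff ℝ (⊤ : ℕ∞) a) (hb : ContDiff ℝ (⊤ : ℕ∞) b)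
    (hc : ContDiff ℝ (⊤ : ℕ∞) c)
    (hf : ContDiff ℝ (⊤ : ℕ∞) f) (hg : ContDiff ℝ (⊤ : ℕ∞) g)
    (hh : ContDiff ℝ (⊤ : ℕ∞) h)
    (hf' : ∀ x, 0 < deriv f x) (hg0 : ∀ x, g x ≠ 0)
    (hAe : ∀ x, A (f x) = a x / (deriv f x * g x ^ 3))
    (hBe : ∀ x, B (f x) = (b x * g x - 4 * a x * h x) / (deriv f x * g x ^ 3))
    (hCe : ∀ x, C (f x) = (6 * a x * h x ^ 2 - 3 * b x * g x * h x
      + c x * g x ^ 2) / (deriv f x * g x ^ 3))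
    (U : Set ℝ) (hU : ∃ p q : ℝ, U = Set.Ioo p q)
    (hI1 : ∀ x ∈ U, 8 * a x * c x - 3 * b x ^ 2 ≠ 0)
    (I Itil : ℝ → ℝ) (hI : Differentiable ℝ I) (hItil : Differentiable ℝ Itil)
    (hmatch : ∀ x ∈ U, Itil (f x) = I x) :
    ∀ x ∈ U,
      (A (f x) ^ 2 / |8 * A (f x) * C (f x) - 3 * B (f x) ^ 2| ^ ((3:ℝ)/2))
          * deriv Itil (f x)
        = (a x ^ 2 / |8 * a x * c x - 3 * b x ^ 2| ^ ((3:ℝ)/2))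
          * deriv I x :=
  abel_deg4_invariant_derivation_general a b c f g h A B C hf' hg0 hAe hBe hCe U hU I Itil hItil
    hmatch
end

section
/- Let a, b, c, d, e : ℝ → ℝ be smooth with a(x) > 0 for all x, and suppose 8·a(x)·c(x) = 3·b(x)² for all x. Define p = a^{1/4}, q = b/(4p³), r = d − 4p·q³, s = e − q⁴. Then p, q, r, s are smooth, p > 0, and for all x ∈ ℝ and all y ∈ ℝ, a(x)·y⁴ + b(x)·y³ + c(x)·y² + d(x)·y + e(x) = (p(x)·y + q(x))⁴ + r(x)·y + s(x). That is, the generalized Abel equations of degree 4 lying in the singular class I₁ = 8ac − 3b² = 0 (with positive leading coefficient) are exactly those of the form y' = (p(x)y + q(x))⁴ + r(x)y + s(x). -/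
/-!
Write `p = a^{1/4}` and `q = b / (4p³)`, so that `a = p⁴` and `b = 4p³q` are the first two
coefficients of `(py + q)⁴`. The singularity condition `8ac = 3b²` then reads
`8p⁴c = 48p⁶q²`, forcing `c = 6p²q²`, the third binomial coefficient; what is left of the
quartic is the affine part `(d - 4pq³)y + (e - q⁴)`.
-/

lemma Real.rpow_one_div_four_pow_four {t : ℝ} (ht : 0 ≤ t) : (t ^ ((1 : ℝ) / 4)) ^ 4 = t := by
  rw [one_div]
  exact_mod_cast Real.rpow_inv_natCast_pow ht four_ne_zero

section SingularQuartic

variable {K : Type*} [Field K] [CharZero K]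

lemma coeff_two_eq_of_eight_mul_eq {p q c : K} (hp : p ≠ 0)
    (hsing : 8 * p ^ 4 * c = 3 * (4 * p ^ 3 * q) ^ 2) : c = 6 * p ^ 2 * q ^ 2 := by
  have h8 : (8 : K) * p ^ 4 ≠ 0 := mul_ne_zero (by norm_num) (pow_ne_zero 4 hp)
  apply mul_left_cancel₀ h8
  linear_combination hsing

lemma quartic_eq_pow_four_add_affine_of_singular {p q b c : K} (hp : p ≠ 0)
    (hsing : 8 * p ^ 4 * c = 3 * b ^ 2) (hb : b = 4 * p ^ 3 * q) (d e y : K) :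
    p ^ 4 * y ^ 4 + b * y ^ 3 + c * y ^ 2 + d * y + e
      = (p * y + q) ^ 4 + (d - 4 * p * q ^ 3) * y + (e - q ^ 4) := by
  subst hb
  rw [coeff_two_eq_of_eight_mul_eq hp hsing]
  ring

end SingularQuartic

theorem abel_deg4_singular_class_form_general
    (a b c d e : ℝ → ℝ)
    (ha : ContDiff ℝ (⊤ : ℕ∞) a) (hb : ContDiff ℝ (⊤ : ℕ∞) b)
    (hd : ContDiff ℝ (⊤ : ℕ∞) d)
    (he : ContDiff ℝ (⊤ : ℕ∞) e)
    (hapos : ∀ x, 0 < a x)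
    (hsing : ∀ x, 8 * a x * c x = 3 * b x ^ 2)
    (p q r s : ℝ → ℝ)
    (hp : p = fun x => a x ^ ((1:ℝ)/4))
    (hq : q = fun x => b x / (4 * p x ^ 3))
    (hr : r = fun x => d x - 4 * p x * q x ^ 3)
    (hs : s = fun x => e x - q x ^ 4) :
    ContDiff ℝ (⊤ : ℕ∞) p ∧ ContDiff ℝ (⊤ : ℕ∞) q
    ∧ ContDiff ℝ (⊤ : ℕ∞) r ∧ ContDiff ℝ (⊤ : ℕ∞) s
    ∧ (∀ x, 0 < p x)
    ∧ ∀ x y : ℝ,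
        a x * y ^ 4 + b x * y ^ 3 + c x * y ^ 2 + d x * y + e x
          = (p x * y + q x) ^ 4 + r x * y + s x := by
  have hppos : ∀ x, 0 < p x := fun x => hp ▸ Real.rpow_pos_of_pos (hapos x) _
  have hp4 : ∀ x, p x ^ 4 = a x := fun x => hp ▸ Real.rpow_one_div_four_pow_four (hapos x).le
  have hcp : ContDiff ℝ (⊤ : ℕ∞) p := hp ▸ ha.rpow_const_of_ne fun x => (hapos x).ne'
  have hcq : ContDiff ℝ (⊤ : ℕ∞) q :=
    hq ▸ hb.div (contDiff_const.mul (hcp.pow 3)) fun x => by have := hppos x; positivity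
  refine ⟨hcp, hcq, hr ▸ hd.sub ((contDiff_const.mul hcp).mul (hcq.pow 3)),
    hs ▸ he.sub (hcq.pow 4), hppos, fun x y => ?_⟩
  have hbq : b x = 4 * p x ^ 3 * q x := by
    rw [hq]
    field_simp [(hppos x).ne']
  rw [hr, hs, ← hp4 x]
  exact quartic_eq_pow_four_add_affine_of_singular (hppos x).ne' (hp4 x ▸ hsing x) hbq _ _ y

/-- generalized Abel equations of degree 4 in the singular class
`I₁ = 8ac − 3b² = 0` (with positive leading coefficient) are exactly those of
the form `y' = (p(x)y + q(x))⁴ + r(x)y + s(x)`, with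
`p = a^{1/4}`, `q = b/(4p³)`, `r = d − 4pq³`, `s = e − q⁴`. -/
theorem abel_deg4_singular_class_form
    (a b c d e : ℝ → ℝ)
    (ha : ContDiff ℝ (⊤ : ℕ∞) a) (hb : ContDiff ℝ (⊤ : ℕ∞) b)
    (hc : ContDiff ℝ (⊤ : ℕ∞) c) (hd : ContDiff ℝ (⊤ : ℕ∞) d)
    (he : ContDiff ℝ (⊤ : ℕ∞) e)
    (hapos : ∀ x, 0 < a x)
    (hsing : ∀ x, 8 * a x * c x = 3 * b x ^ 2)
    (p q r s : ℝ → ℝ)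
    (hp : p = fun x => a x ^ ((1:ℝ)/4))
    (hq : q = fun x => b x / (4 * p x ^ 3))
    (hr : r = fun x => d x - 4 * p x * q x ^ 3)
    (hs : s = fun x => e x - q x ^ 4) :
    ContDiff ℝ (⊤ : ℕ∞) p ∧ ContDiff ℝ (⊤ : ℕ∞) q
    ∧ ContDiff ℝ (⊤ : ℕ∞) r ∧ ContDiff ℝ (⊤ : ℕ∞) s
    ∧ (∀ x, 0 < p x)
    ∧ ∀ x y : ℝ,
        a x * y ^ 4 + b x * y ^ 3 + c x * y ^ 2 + d x * y + e x
          = (p x * y + q x) ^ 4 + r x * y + s x :=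
  abel_deg4_singular_class_form_general a b c d e ha hb hd he hapos hsing p q r s hp hq hr hs
end

section
/- Let p, q, r, s : ℝ → ℝ be smooth with p(x) ≠ 0 for all x, and suppose the relative invariant L₁ = q'·p − p'·q + p²·s − p·q·r vanishes identically. Then for every x₀ ∈ ℝ there exist an open interval V containing x₀ and smooth functions f, g, h : V → ℝ with f' ≠ 0 and g ≠ 0 on V, such that for every differentiable y : V → ℝ satisfying y'(x) = (p(x)·y(x) + q(x))⁴ + r(x)·y(x) + s(x) on V and every differentiable Y with Y(f(x)) = g(x)·y(x) + h(x) for all x ∈ V, one has Y'(f(x)) = Y(f(x))⁴ for all x ∈ V. In particular, all equations of this singular class with L₁ = 0 are locally equivalent to Y' = Y⁴. -/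
/-!
Put `B = ∫ (p'/p + r)` and `φ = e^{-B} (p y + q)`. The choice of `B` makes the terms of `φ'`
that are linear in `y` cancel, and `L₁ = 0` makes the remaining free term vanish, so
`φ' = e^{-B} p (p y + q)⁴ = p e^{3B} φ⁴`. Taking as new independent variable a primitive `f`
of `p e^{3B}` therefore turns the equation into `Y' = Y⁴`.
-/

open Real Topology
open scoped ContDiff

theorem ContDiff.primitive {a : ℝ → ℝ} {n : ℕ∞} (ha : ContDiff ℝ n a) (x₀ : ℝ) :
    ContDiff ℝ (n + 1) (fun x => ∫ t in x₀..x, a t) := by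
  have hderiv : ∀ x, HasDerivAt (fun x => ∫ t in x₀..x, a t) (a x) x := fun x =>
    (ha.continuous.integral_hasStrictDerivAt x₀ x).hasDerivAt
  rw [contDiff_succ_iff_deriv]
  refine ⟨fun x => (hderiv x).differentiableAt, by simp, ?_⟩
  rwa [funext fun x => (hderiv x).deriv]

theorem hasDerivAt_exp_neg_mul_of_L1_eq_zero {p q r s y B : ℝ → ℝ} {x : ℝ}
    (hp : DifferentiableAt ℝ p x) (hq : DifferentiableAt ℝ q x)
    (hB : HasDerivAt B (deriv p x / p x + r x) x)
    (hy : HasDerivAt y ((p x * y x + q x) ^ 4 + r x * y x + s x) x) (hp0 : p x ≠ 0)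
    (hL1 : deriv q x * p x - deriv p x * q x + p x ^ 2 * s x - p x * q x * r x = 0) :
    HasDerivAt (fun t => exp (-B t) * (p t * y t + q t))
      (exp (-B x) * p x * (p x * y x + q x) ^ 4) x := by
  have hE : HasDerivAt (fun t => exp (-B t)) (exp (-B x) * -(deriv p x / p x + r x)) x :=
    hB.neg.exp
  have hlin : HasDerivAt (fun t => p t * y t + q t)
      (deriv p x * y x + p x * ((p x * y x + q x) ^ 4 + r x * y x + s x) + deriv q x) x :=
    (hp.hasDerivAt.mul hy).add hq.hasDerivAt
  refine (hE.mul hlin).congr_deriv ?_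
  linear_combination (norm := (field_simp; ring)) (exp (-B x) / p x) * hL1

section Transformation

variable (p r : ℝ → ℝ) (x₀ : ℝ)

noncomputable def abelGaugeExponent (x : ℝ) : ℝ :=
  ∫ t in x₀..x, (deriv p t / p t + r t)

noncomputable def abelNewVariable (x : ℝ) : ℝ :=
  ∫ t in x₀..x, p t * exp (3 * abelGaugeExponent p r x₀ t)

variable {p r}
variable (hp : ContDiff ℝ ∞ p) (hr : ContDiff ℝ ∞ r) (hp0 : ∀ x, p x ≠ 0)
include hp hr hp0

theorem contDiff_abelGaugeExponent : ContDiff ℝ ∞ (abelGaugeExponent p r x₀) :=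
  ((hp.deriv'.div hp hp0).add hr |>.primitive x₀).of_le le_self_add

theorem hasDerivAt_abelGaugeExponent (x : ℝ) :
    HasDerivAt (abelGaugeExponent p r x₀) (deriv p x / p x + r x) x :=
  (((hp.deriv'.div hp hp0).add hr).continuous.integral_hasStrictDerivAt x₀ x).hasDerivAt

theorem contDiff_abelNewVariableDensity :
    ContDiff ℝ ∞ (fun x => p x * exp (3 * abelGaugeExponent p r x₀ x)) :=
  hp.mul (contDiff_const.mul (contDiff_abelGaugeExponent x₀ hp hr hp0)).exp

theorem contDiff_abelNewVariable : ContDiff ℝ ∞ (abelNewVariable p r x₀) :=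
  ((contDiff_abelNewVariableDensity x₀ hp hr hp0).primitive x₀).of_le le_self_add

theorem hasDerivAt_abelNewVariable (x : ℝ) :
    HasDerivAt (abelNewVariable p r x₀) (p x * exp (3 * abelGaugeExponent p r x₀ x)) x :=
  ((contDiff_abelNewVariableDensity x₀ hp hr hp0).continuous.integral_hasStrictDerivAt
    x₀ x).hasDerivAt

end Transformation

theorem abel_deg4_singular_L1_zero_equivalent_to_Y4_general
    (p q r s : ℝ → ℝ)
    (hp : ContDiff ℝ (⊤ : ℕ∞) p) (hq : ContDiff ℝ (⊤ : ℕ∞) q)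
    (hr : ContDiff ℝ (⊤ : ℕ∞) r)
    (hp0 : ∀ x, p x ≠ 0)
    (hL1 : ∀ x, deriv q x * p x - deriv p x * q x
      + p x ^ 2 * s x - p x * q x * r x = 0) :
    ∀ x₀ : ℝ, ∃ (u v : ℝ) (f g h : ℝ → ℝ),
      x₀ ∈ Set.Ioo u v
      ∧ ContDiffOn ℝ (⊤ : ℕ∞) f (Set.Ioo u v)
      ∧ ContDiffOn ℝ (⊤ : ℕ∞) g (Set.Ioo u v)
      ∧ ContDiffOn ℝ (⊤ : ℕ∞) h (Set.Ioo u v)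
      ∧ (∀ x ∈ Set.Ioo u v, deriv f x ≠ 0)
      ∧ (∀ x ∈ Set.Ioo u v, g x ≠ 0)
      ∧ ∀ y Y : ℝ → ℝ,
          (∀ x ∈ Set.Ioo u v, DifferentiableAt ℝ y x) →
          (∀ x ∈ Set.Ioo u v, deriv y x
            = (p x * y x + q x) ^ 4 + r x * y x + s x) →
          (∀ x ∈ Set.Ioo u v, DifferentiableAt ℝ Y (f x)) →
          (∀ x ∈ Set.Ioo u v, Y (f x) = g x * y x + h x) →
          ∀ x ∈ Set.Ioo u v, deriv Y (f x) = Y (f x) ^ 4 := by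
  intro x₀
  set B := abelGaugeExponent p r x₀
  have hB := contDiff_abelGaugeExponent x₀ hp hr hp0
  have hf := hasDerivAt_abelNewVariable x₀ hp hr hp0
  have hf0 : ∀ x, p x * exp (3 * B x) ≠ 0 := fun x => mul_ne_zero (hp0 x) (exp_ne_zero _)
  refine ⟨x₀ - 1, x₀ + 1, abelNewVariable p r x₀, fun x => exp (-B x) * p x,
    fun x => exp (-B x) * q x, ⟨by linarith, by linarith⟩,
    (contDiff_abelNewVariable x₀ hp hr hp0).contDiffOn, (hB.neg.exp.mul hp).contDiffOn,
    (hB.neg.exp.mul hq).contDiffOn, fun x _ => (hf x).deriv ▸ hf0 x,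
    fun x _ => mul_ne_zero (exp_ne_zero _) (hp0 x), ?_⟩
  intro y Y hy hy' hY hYf x hx
  have hφ : HasDerivAt (fun t => exp (-B t) * (p t * y t + q t))
      (exp (-B x) * p x * (p x * y x + q x) ^ 4) x :=
    hasDerivAt_exp_neg_mul_of_L1_eq_zero (hp.differentiable (by simp) x)
      (hq.differentiable (by simp) x) (hasDerivAt_abelGaugeExponent x₀ hp hr hp0 x)
      (hy' x hx ▸ (hy x hx).hasDerivAt) (hp0 x) (hL1 x)
  have hYφ : (fun t => Y (abelNewVariable p r x₀ t)) =ᶠ[𝓝 x]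
      fun t => exp (-B t) * (p t * y t + q t) := by
    filter_upwards [isOpen_Ioo.mem_nhds hx] with t ht
    rw [hYf t ht]; ring
  have hchain := ((hY x hx).hasDerivAt.comp x (hf x)).unique (hφ.congr_of_eventuallyEq hYφ)
  refine mul_right_cancel₀ (hf0 x) (hchain.trans ?_)
  have hexp : exp (-B x) ^ 4 * exp (3 * B x) = exp (-B x) := by
    rw [← exp_nat_mul, ← exp_add]; ring_nf
  rw [hYf x hx]
  linear_combination (-p x * (p x * y x + q x) ^ 4) * hexp

/-- every ODE of the singular degree-4 class
`y' = (p(x)y + q(x))⁴ + r(x)y + s(x)` whose relative invariant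
`L₁ = q'p − p'q + p²s − pqr` vanishes identically is locally equivalent, via a
linear point transformation, to `Y' = Y⁴`. -/
theorem abel_deg4_singular_L1_zero_equivalent_to_Y4
    (p q r s : ℝ → ℝ)
    (hp : ContDiff ℝ (⊤ : ℕ∞) p) (hq : ContDiff ℝ (⊤ : ℕ∞) q)
    (hr : ContDiff ℝ (⊤ : ℕ∞) r) (hs : ContDiff ℝ (⊤ : ℕ∞) s)
    (hp0 : ∀ x, p x ≠ 0)
    (hL1 : ∀ x, deriv q x * p x - deriv p x * q x
      + p x ^ 2 * s x - p x * q x * r x = 0) :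
    ∀ x₀ : ℝ, ∃ (u v : ℝ) (f g h : ℝ → ℝ),
      x₀ ∈ Set.Ioo u v
      ∧ ContDiffOn ℝ (⊤ : ℕ∞) f (Set.Ioo u v)
      ∧ ContDiffOn ℝ (⊤ : ℕ∞) g (Set.Ioo u v)
      ∧ ContDiffOn ℝ (⊤ : ℕ∞) h (Set.Ioo u v)
      ∧ (∀ x ∈ Set.Ioo u v, deriv f x ≠ 0)
      ∧ (∀ x ∈ Set.Ioo u v, g x ≠ 0)
      ∧ ∀ y Y : ℝ → ℝ,
          (∀ x ∈ Set.Ioo u v, DifferentiableAt ℝ y x) →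
          (∀ x ∈ Set.Ioo u v, deriv y x
            = (p x * y x + q x) ^ 4 + r x * y x + s x) →
          (∀ x ∈ Set.Ioo u v, DifferentiableAt ℝ Y (f x)) →
          (∀ x ∈ Set.Ioo u v, Y (f x) = g x * y x + h x) →
          ∀ x ∈ Set.Ioo u v, deriv Y (f x) = Y (f x) ^ 4 :=
  abel_deg4_singular_L1_zero_equivalent_to_Y4_general p q r s hp hq hr hp0 hL1
end

section
/- Let a, b, c, d, f, g, h : ℝ → ℝ be smooth with f' ≠ 0 and g ≠ 0 everywhere, and let A, B, C, D : ℝ → ℝ satisfy, for all x: A(f(x)) = a/(f'·g⁴), B(f(x)) = (b·g − 5a·h)/(f'·g⁴), C(f(x)) = (10a·h² − 4b·g·h + c·g²)/(f'·g⁴), D(f(x)) = (−10a·h³ + 6b·g·h² − 3c·g²·h + d·g³)/(f'·g⁴) (right-hand sides evaluated at x). Then for all x: (5·A·C − 2·B²)(f(x)) = (5ac − 2b²)(x) / (f'(x)²·g(x)⁶) and (4·B³ − 15·A·B·C + 25·A²·D)(f(x)) = (4b³ − 15abc + 25a²d)(x) / (f'(x)³·g(x)⁹). Consequently, at every x with K₁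 = 5ac − 2b² nonzero, the quotient K₂²/K₁³ (with K₂ = 4b³ − 15abc + 25a²d) computed from (A,B,C,D) at f(x) equals K₂²/K₁³ computed from (a,b,c,d) at x; i.e., K₁ and K₂ are relative invariants of the generalized Abel equation of degree 5, and J₀ = K₂²/K₁³ is an absolute invariant. -/
/-!
At each point the transformed coefficients are rational in `a, b, c, d, g, h` and `p = f'`.
In `K₁` and `K₂` of the transformed coefficients the shift `h` cancels identically, leaving
the factors `(p g³)⁻²` and `(p g³)⁻³`; so `K₂²/K₁³`, of total weight zero, is unchanged.
-/

namespace AbelDegFive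

variable {K : Type*} [Field K]

def relInvK₁ (a b c : K) : K := 5 * a * c - 2 * b ^ 2

def relInvK₂ (a b c d : K) : K := 4 * b ^ 3 - 15 * a * b * c + 25 * a ^ 2 * d

section Transform

variable (a b c d g h p : K)

def transformedA : K := a / (p * g ^ 4)

def transformedB : K := (b * g - 5 * a * h) / (p * g ^ 4)

def transformedC : K := (10 * a * h ^ 2 - 4 * b * g * h + c * g ^ 2) / (p * g ^ 4)

def transformedD : K :=
  (-10 * a * h ^ 3 + 6 * b * g * h ^ 2 - 3 * c * g ^ 2 * h + d * g ^ 3) / (p * g ^ 4)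

variable {a b c d g h p}

theorem relInvK₁_transformed (hp : p ≠ 0) (hg : g ≠ 0) :
    relInvK₁ (transformedA a g p) (transformedB a b g h p) (transformedC a b c g h p)
      = relInvK₁ a b c / (p ^ 2 * g ^ 6) := by
  unfold relInvK₁ transformedA transformedB transformedC
  field_simp
  ring

theorem relInvK₂_transformed (hp : p ≠ 0) (hg : g ≠ 0) :
    relInvK₂ (transformedA a g p) (transformedB a b g h p) (transformedC a b c g h p)
        (transformedD a b c d g h p)
      = relInvK₂ a b c d / (p ^ 3 * g ^ 9) := by
  unfold relInvK₂ transformedA transformedB transformedC transformedD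
  field_simp
  ring

end Transform

theorem sq_div_cube_eq_of_weights {K₁ K₂ w : K} (hw : w ≠ 0) :
    (K₂ / w ^ 3) ^ 2 / (K₁ / w ^ 2) ^ 3 = K₂ ^ 2 / K₁ ^ 3 := by
  rw [div_pow, div_pow, div_div_div_eq, ← pow_mul, ← pow_mul, mul_comm (K₂ ^ 2)]
  exact mul_div_mul_left _ _ (pow_ne_zero _ hw)

end AbelDegFive

theorem abel_deg5_K1_K2_relative_invariants_general
    (a b c d f g h A B C D : ℝ → ℝ)
    (hf' : ∀ x, deriv f x ≠ 0) (hg0 : ∀ x, g x ≠ 0)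
    (hAe : ∀ x, A (f x) = a x / (deriv f x * g x ^ 4))
    (hBe : ∀ x, B (f x) = (b x * g x - 5 * a x * h x) / (deriv f x * g x ^ 4))
    (hCe : ∀ x, C (f x) = (10 * a x * h x ^ 2 - 4 * b x * g x * h x
      + c x * g x ^ 2) / (deriv f x * g x ^ 4))
    (hDe : ∀ x, D (f x) = (-10 * a x * h x ^ 3 + 6 * b x * g x * h x ^ 2
      - 3 * c x * g x ^ 2 * h x + d x * g x ^ 3) / (deriv f x * g x ^ 4)) :
    (∀ x, 5 * A (f x) * C (f x) - 2 * B (f x) ^ 2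
      = (5 * a x * c x - 2 * b x ^ 2) / (deriv f x ^ 2 * g x ^ 6))
    ∧ (∀ x, 4 * B (f x) ^ 3 - 15 * A (f x) * B (f x) * C (f x)
        + 25 * A (f x) ^ 2 * D (f x)
      = (4 * b x ^ 3 - 15 * a x * b x * c x + 25 * a x ^ 2 * d x)
        / (deriv f x ^ 3 * g x ^ 9))
    ∧ (∀ x, 5 * a x * c x - 2 * b x ^ 2 ≠ 0 →
        (4 * B (f x) ^ 3 - 15 * A (f x) * B (f x) * C (f x)
          + 25 * A (f x) ^ 2 * D (f x)) ^ 2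
          / (5 * A (f x) * C (f x) - 2 * B (f x) ^ 2) ^ 3
        = (4 * b x ^ 3 - 15 * a x * b x * c x + 25 * a x ^ 2 * d x) ^ 2
          / (5 * a x * c x - 2 * b x ^ 2) ^ 3) := by
  have hK₁ : ∀ x, 5 * A (f x) * C (f x) - 2 * B (f x) ^ 2
      = (5 * a x * c x - 2 * b x ^ 2) / (deriv f x ^ 2 * g x ^ 6) := fun x => by
    rw [hAe, hBe, hCe]
    exact AbelDegFive.relInvK₁_transformed (hf' x) (hg0 x)
  have hK₂ : ∀ x, 4 * B (f x) ^ 3 - 15 * A (f x) * B (f x) * C (f x)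
        + 25 * A (f x) ^ 2 * D (f x)
      = (4 * b x ^ 3 - 15 * a x * b x * c x + 25 * a x ^ 2 * d x)
        / (deriv f x ^ 3 * g x ^ 9) := fun x => by
    rw [hAe, hBe, hCe, hDe]
    exact AbelDegFive.relInvK₂_transformed (hf' x) (hg0 x)
  refine ⟨hK₁, hK₂, fun x _ => ?_⟩
  have hw : deriv f x * g x ^ 3 ≠ 0 := mul_ne_zero (hf' x) (pow_ne_zero _ (hg0 x))
  rw [hK₁, hK₂, show deriv f x ^ 2 * g x ^ 6 = (deriv f x * g x ^ 3) ^ 2 by ring,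
    show deriv f x ^ 3 * g x ^ 9 = (deriv f x * g x ^ 3) ^ 3 by ring]
  exact AbelDegFive.sq_div_cube_eq_of_weights hw

/-- `K₁ = 5ac − 2b²` and `K₂ = 4b³ − 15abc + 25a²d` are relative
invariants (of weights `(f')²g⁶` and `(f')³g⁹`) of the generalized Abel
equation of degree 5 under linear point transformations, and `J₀ = K₂²/K₁³` is
an absolute invariant. -/
theorem abel_deg5_K1_K2_relative_invariants
    (a b c d f g h A B C D : ℝ → ℝ)
    (ha : ContDiff ℝ (⊤ : ℕ∞) a) (hb : ContDiff ℝ (⊤ : ℕ∞) b)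
    (hc : ContDiff ℝ (⊤ : ℕ∞) c) (hd : ContDiff ℝ (⊤ : ℕ∞) d)
    (hf : ContDiff ℝ (⊤ : ℕ∞) f) (hg : ContDiff ℝ (⊤ : ℕ∞) g)
    (hh : ContDiff ℝ (⊤ : ℕ∞) h)
    (hf' : ∀ x, deriv f x ≠ 0) (hg0 : ∀ x, g x ≠ 0)
    (hAe : ∀ x, A (f x) = a x / (deriv f x * g x ^ 4))
    (hBe : ∀ x, B (f x) = (b x * g x - 5 * a x * h x) / (deriv f x * g x ^ 4))
    (hCe : ∀ x, C (f x) = (10 * a x * h x ^ 2 - 4 * b x * g x * h x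
      + c x * g x ^ 2) / (deriv f x * g x ^ 4))
    (hDe : ∀ x, D (f x) = (-10 * a x * h x ^ 3 + 6 * b x * g x * h x ^ 2
      - 3 * c x * g x ^ 2 * h x + d x * g x ^ 3) / (deriv f x * g x ^ 4)) :
    (∀ x, 5 * A (f x) * C (f x) - 2 * B (f x) ^ 2
      = (5 * a x * c x - 2 * b x ^ 2) / (deriv f x ^ 2 * g x ^ 6))
    ∧ (∀ x, 4 * B (f x) ^ 3 - 15 * A (f x) * B (f x) * C (f x)
        + 25 * A (f x) ^ 2 * D (f x)
      = (4 * b x ^ 3 - 15 * a x * b x * c x + 25 * a x ^ 2 * d x)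
        / (deriv f x ^ 3 * g x ^ 9))
    ∧ (∀ x, 5 * a x * c x - 2 * b x ^ 2 ≠ 0 →
        (4 * B (f x) ^ 3 - 15 * A (f x) * B (f x) * C (f x)
          + 25 * A (f x) ^ 2 * D (f x)) ^ 2
          / (5 * A (f x) * C (f x) - 2 * B (f x) ^ 2) ^ 3
        = (4 * b x ^ 3 - 15 * a x * b x * c x + 25 * a x ^ 2 * d x) ^ 2
          / (5 * a x * c x - 2 * b x ^ 2) ^ 3) :=
  abel_deg5_K1_K2_relative_invariants_general a b c d f g h A B C D hf' hg0 hAe hBe hCe hDe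
end

section
/- Let a, b, c, d, e, f₀ : ℝ → ℝ be smooth with a(x) ≠ 0 for all x, and suppose 5·a(x)·c(x) = 2·b(x)² for all x. Define p = a^{1/5} (the real fifth root, which is smooth and nonvanishing since a ≠ 0), q = b/(5p⁴), r = d − 10p²·q³, s = e − 5p·q⁴, t = f₀ − q⁵. Then p, q, r, s, t are smooth and for all x ∈ ℝ and all y ∈ ℝ, a(x)·y⁵ + b(x)·y⁴ + c(x)·y³ + d(x)·y² + e(x)·y + f₀(x) = (p(x)·y + q(x))⁵ + r(x)·y² + s(x)·y + t(x). Moreover, r(x) = 0 if and only if K₂(x) = 4b(x)³ − 15a(x)b(x)c(x) + 25a(x)²d(x) = 0; hence the equations in the second singular class K₁ = K₂ = 0 are exactly those of the form y' = (p(x)y + q(x))⁵ + s(x)y + t(x). -/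
/-! Since `p⁵ = a` and `q = b / (5p⁴)`, the two leading coefficients of `(py + q)⁵` are
`a` and `b`, and the singularity condition `5ac = 2b²` forces the third one, `10p³q²`, to be
`c`. The remainder is then `r y² + s y + t`, and `K₂ = 25 a² r` with `a ≠ 0`. The fifth root
is smooth wherever `a ≠ 0`, because near such a point it is a real power of `a` or of `-a`. -/

noncomputable def signedRpow (u y : ℝ) : ℝ := if u < 0 then -((-u) ^ y) else u ^ y

theorem signedRpow_pow_of_odd {n : ℕ} (hn : Odd n) (u : ℝ) :
    signedRpow u (n : ℝ)⁻¹ ^ n = u := by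
  have hn0 : n ≠ 0 := hn.pos.ne'
  unfold signedRpow
  split_ifs with hu
  · rw [hn.neg_pow, Real.rpow_inv_natCast_pow (neg_nonneg.2 hu.le) hn0, neg_neg]
  · exact Real.rpow_inv_natCast_pow (not_lt.1 hu) hn0

theorem contDiffAt_signedRpow {u : ℝ} (hu : u ≠ 0) (y : ℝ) {n : WithTop ℕ∞} :
    ContDiffAt ℝ n (signedRpow · y) u := by
  rcases hu.lt_or_gt with hneg | hpos
  · have hloc : (fun v => -((-v) ^ y)) =ᶠ[nhds u] (signedRpow · y) := by
      filter_upwards [Iio_mem_nhds hneg] with v hv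
      simp [signedRpow, Set.mem_Iio.1 hv]
    exact ((contDiffAt_id.neg.rpow_const_of_ne (by simpa using hneg.ne)).neg).congr_of_eventuallyEq
      hloc.symm
  · have hloc : (· ^ y) =ᶠ[nhds u] (signedRpow · y) := by
      filter_upwards [Ioi_mem_nhds hpos] with v hv
      simp [signedRpow, (Set.mem_Ioi.1 hv).le, not_lt_of_ge]
    exact (Real.contDiffAt_rpow_const_of_ne hpos.ne').congr_of_eventuallyEq hloc.symm

theorem ContDiff.signedRpow {E : Type*} [NormedAddCommGroup E] [NormedSpace ℝ E]
    {f : E → ℝ} {n : WithTop ℕ∞} (hf : ContDiff ℝ n f) (h0 : ∀ x, f x ≠ 0) (y : ℝ) :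
    ContDiff ℝ n (fun x => signedRpow (f x) y) :=
  contDiff_iff_contDiffAt.2 fun x => (contDiffAt_signedRpow (h0 x) y).comp x hf.contDiffAt

section Quintic

variable {K : Type*} [Field K] [CharZero K] {p q : K}

theorem cubic_coeff_eq_of_singular {c : K} (hp : p ≠ 0)
    (h : 5 * p ^ 5 * c = 2 * (5 * p ^ 4 * q) ^ 2) : c = 10 * p ^ 3 * q ^ 2 := by
  have h5 : (5 : K) * p ^ 5 ≠ 0 := mul_ne_zero (by norm_num) (pow_ne_zero 5 hp)
  exact mul_left_cancel₀ h5 (by linear_combination h)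

theorem abelK₂_eq_zero_iff (hp : p ≠ 0) (d : K) :
    4 * (5 * p ^ 4 * q) ^ 3 - 15 * p ^ 5 * (5 * p ^ 4 * q) * (10 * p ^ 3 * q ^ 2)
        + 25 * (p ^ 5) ^ 2 * d = 0 ↔ d - 10 * p ^ 2 * q ^ 3 = 0 := by
  have hK₂ : 4 * (5 * p ^ 4 * q) ^ 3 - 15 * p ^ 5 * (5 * p ^ 4 * q) * (10 * p ^ 3 * q ^ 2)
      + 25 * (p ^ 5) ^ 2 * d = 25 * p ^ 10 * (d - 10 * p ^ 2 * q ^ 3) := by ring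
  rw [hK₂, mul_eq_zero, or_iff_right (mul_ne_zero (by norm_num) (pow_ne_zero 10 hp))]

end Quintic

theorem abel_deg5_singular_class_form_general
    (a b c d e f₀ : ℝ → ℝ)
    (ha : ContDiff ℝ (⊤ : ℕ∞) a) (hb : ContDiff ℝ (⊤ : ℕ∞) b)
    (hd : ContDiff ℝ (⊤ : ℕ∞) d)
    (he : ContDiff ℝ (⊤ : ℕ∞) e) (hf₀ : ContDiff ℝ (⊤ : ℕ∞) f₀)
    (ha0 : ∀ x, a x ≠ 0)
    (hsing : ∀ x, 5 * a x * c x = 2 * b x ^ 2)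
    (p q r s t : ℝ → ℝ)
    (hp : p = fun x => if a x < 0 then -((-(a x)) ^ ((1:ℝ)/5))
      else a x ^ ((1:ℝ)/5))
    (hq : q = fun x => b x / (5 * p x ^ 4))
    (hr : r = fun x => d x - 10 * p x ^ 2 * q x ^ 3)
    (hs : s = fun x => e x - 5 * p x * q x ^ 4)
    (ht : t = fun x => f₀ x - q x ^ 5) :
    ContDiff ℝ (⊤ : ℕ∞) p ∧ ContDiff ℝ (⊤ : ℕ∞) q
    ∧ ContDiff ℝ (⊤ : ℕ∞) r ∧ ContDiff ℝ (⊤ : ℕ∞) s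
    ∧ ContDiff ℝ (⊤ : ℕ∞) t
    ∧ (∀ x y : ℝ,
        a x * y ^ 5 + b x * y ^ 4 + c x * y ^ 3 + d x * y ^ 2 + e x * y + f₀ x
          = (p x * y + q x) ^ 5 + r x * y ^ 2 + s x * y + t x)
    ∧ (∀ x, r x = 0
        ↔ 4 * b x ^ 3 - 15 * a x * b x * c x + 25 * a x ^ 2 * d x = 0) := by
  replace hp : p = fun x => signedRpow (a x) (5 : ℕ)⁻¹ := by
    rw [hp]; norm_num [signedRpow]
  have hp5 (x : ℝ) : p x ^ 5 = a x := by rw [hp]; exact signedRpow_pow_of_odd (by decide) _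
  have hp0 (x : ℝ) : p x ≠ 0 := fun h => ha0 x (by rw [← hp5 x, h, zero_pow (by norm_num)])
  have hpC : ContDiff ℝ (⊤ : ℕ∞) p := hp ▸ ha.signedRpow ha0 _
  have hqC : ContDiff ℝ (⊤ : ℕ∞) q :=
    hq ▸ hb.div (contDiff_const.mul (hpC.pow 4)) fun x => by simp [hp0 x]
  have hb' (x : ℝ) : b x = 5 * p x ^ 4 * q x := by rw [hq]; field_simp [hp0 x]
  have hc' (x : ℝ) : c x = 10 * p x ^ 3 * q x ^ 2 :=
    cubic_coeff_eq_of_singular (hp0 x) (by rw [hp5, ← hb']; exact hsing x)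
  refine ⟨hpC, hqC, hr ▸ by fun_prop, hs ▸ by fun_prop, ht ▸ by fun_prop,
    fun x y => ?_, fun x => ?_⟩
  · rw [← hp5 x, hb' x, hc' x, hr, hs, ht]
    ring
  · rw [← hp5 x, hb' x, hc' x, hr]
    exact (abelK₂_eq_zero_iff (hp0 x) (d x)).symm

/-- generalized Abel equations of degree 5 with `5ac = 2b²` can
be written as `y' = (p(x)y + q(x))⁵ + r(x)y² + s(x)y + t(x)` with
`p = a^{1/5}` (real fifth root), `q = b/(5p⁴)`, `r = d − 10p²q³`,
`s = e − 5pq⁴`, `t = f₀ − q⁵`; moreover `r = 0 ↔ K₂ = 0`, so the second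
singular class `K₁ = K₂ = 0` consists exactly of the equations
`y' = (p(x)y + q(x))⁵ + s(x)y + t(x)`. -/
theorem abel_deg5_singular_class_form
    (a b c d e f₀ : ℝ → ℝ)
    (ha : ContDiff ℝ (⊤ : ℕ∞) a) (hb : ContDiff ℝ (⊤ : ℕ∞) b)
    (hc : ContDiff ℝ (⊤ : ℕ∞) c) (hd : ContDiff ℝ (⊤ : ℕ∞) d)
    (he : ContDiff ℝ (⊤ : ℕ∞) e) (hf₀ : ContDiff ℝ (⊤ : ℕ∞) f₀)
    (ha0 : ∀ x, a x ≠ 0)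
    (hsing : ∀ x, 5 * a x * c x = 2 * b x ^ 2)
    (p q r s t : ℝ → ℝ)
    (hp : p = fun x => if a x < 0 then -((-(a x)) ^ ((1:ℝ)/5))
      else a x ^ ((1:ℝ)/5))
    (hq : q = fun x => b x / (5 * p x ^ 4))
    (hr : r = fun x => d x - 10 * p x ^ 2 * q x ^ 3)
    (hs : s = fun x => e x - 5 * p x * q x ^ 4)
    (ht : t = fun x => f₀ x - q x ^ 5) :
    ContDiff ℝ (⊤ : ℕ∞) p ∧ ContDiff ℝ (⊤ : ℕ∞) q
    ∧ ContDiff ℝ (⊤ : ℕ∞) r ∧ ContDiff ℝ (⊤ : ℕ∞) s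
    ∧ ContDiff ℝ (⊤ : ℕ∞) t
    ∧ (∀ x y : ℝ,
        a x * y ^ 5 + b x * y ^ 4 + c x * y ^ 3 + d x * y ^ 2 + e x * y + f₀ x
          = (p x * y + q x) ^ 5 + r x * y ^ 2 + s x * y + t x)
    ∧ (∀ x, r x = 0
        ↔ 4 * b x ^ 3 - 15 * a x * b x * c x + 25 * a x ^ 2 * d x = 0) :=
  abel_deg5_singular_class_form_general a b c d e f₀ ha hb hd he hf₀ ha0 hsing p q r s t hp hq hr hs
    ht
end
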